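/- arXiv:2507.07777 — 10 statements merged into one kernel-verified Lean document; each statement's English description precedes it below -/
import Mathlib

section
/- Let a, x ∈ 𝒜. The following are equivalent: (1) x is the w-weighted core inverse of a; (2) xwawx = x, (wawx)* = wawx, x𝒜 = (aw)𝒜 and x*𝒜 = (waw)𝒜; (3) xwawx = x, (wawx)* = wawx, °(x) = °(aw) and °(x*) = °(waw); (4) xwawx = x, (wawx)* = wawx, °(x) = °(aw) and °(x*) ⊆ °(waw). -/
open Filter

/-- `y` is quasinilpotent: `‖yⁿ‖^{1/n} → 0`. -/
def IsQuasinilpotent {R : Type*} [NormedRing R] (y : R) : Prop :=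
  Filter.Tendsto (fun n : ℕ => ‖y ^ n‖ ^ (1 / (n : ℝ))) Filter.atTop (nhds 0)

/-- `y` is `w`-quasinilpotent: `‖(yw)ⁿ‖^{1/n} → 0`. -/
def IsWQuasinilpotent {R : Type*} [NormedRing R] (w y : R) : Prop :=
  Filter.Tendsto (fun n : ℕ => ‖(y * w) ^ n‖ ^ (1 / (n : ℝ))) Filter.atTop (nhds 0)

/-- `x` is a `w`-weighted core inverse of `a`. -/
def IsWCoreInv {R : Type*} [NormedRing R] [StarRing R] (w a x : R) : Prop :=
  a * (w * x) ^ 2 = x ∧ star (w * a * w * x) = w * a * w * x ∧ x * w * (a * w) ^ 2 = a * w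

/-- `x` is a generalized `w`-weighted core-EP inverse of `a`. -/
def IsWCoreEPInv {R : Type*} [NormedRing R] [StarRing R] (w a x : R) : Prop :=
  a * (w * x) ^ 2 = x ∧ star (w * a * w * x) = w * a * w * x ∧
    Filter.Tendsto (fun n : ℕ => ‖(a * w) ^ n - x * w * (a * w) ^ (n + 1)‖ ^ (1 / (n : ℝ)))
      Filter.atTop (nhds 0)

/-- `g` is a group inverse of `b`. -/
def IsGroupInv {R : Type*} [Ring R] (b g : R) : Prop :=
  b * g * b = b ∧ g * b * g = g ∧ b * g = g * b

/-- `u` is a (1,3)-inverse of `b`. -/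
def Is13Inv {R : Type*} [Ring R] [StarRing R] (b u : R) : Prop :=
  b * u * b = b ∧ star (b * u) = b * u

/-- `x` is a `(b,c)`-inverse of `a`. -/
def IsBCInv {R : Type*} [Ring R] (b c a x : R) : Prop :=
  x * a * b = b ∧ c * a * x = c ∧ (∃ s, x = b * s * x) ∧ (∃ t, x = x * t * c)

/-- `x` is a g-Drazin inverse of `b`. -/
def IsGDrazinInv {R : Type*} [NormedRing R] (b x : R) : Prop :=
  b * x = x * b ∧ x * b * x = x ∧ IsQuasinilpotent (b - b ^ 2 * x)

/-- `x` is a `w`-weighted g-Drazin inverse of `a`. -/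
def IsWGDrazinInv {R : Type*} [NormedRing R] (w a x : R) : Prop :=
  a * w * x = x * w * a ∧ x * w * a * w * x = x ∧
    IsWQuasinilpotent w (a - a * w * x * w * a)

/-- `x` is a core inverse of `a`. -/
def IsCoreInv {R : Type*} [Ring R] [StarRing R] (a x : R) : Prop :=
  a * x ^ 2 = x ∧ star (a * x) = a * x ∧ x * a ^ 2 = a

/-- `x` is a generalized core-EP inverse of `a`. -/
def IsCoreEPInv {R : Type*} [NormedRing R] [StarRing R] (a x : R) : Prop :=
  a * x ^ 2 = x ∧ star (a * x) = a * x ∧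
    Filter.Tendsto (fun n : ℕ => ‖a ^ n - x * a ^ (n + 1)‖ ^ (1 / (n : ℝ)))
      Filter.atTop (nhds 0)

/-- `x` is a pseudo core (core-EP) inverse of `a`. -/
def IsPseudoCoreInv {R : Type*} [Ring R] [StarRing R] (a x : R) : Prop :=
  a * x ^ 2 = x ∧ star (a * x) = a * x ∧ ∃ k : ℕ, 0 < k ∧ x * a ^ (k + 1) = a ^ k

/-- `u` is a `(1,3,w)`-inverse of `b`. -/
def Is13wInv {R : Type*} [Ring R] [StarRing R] (w b u : R) : Prop :=
  b = b * w * u * w * b ∧ star (w * b * w * u) = w * b * w * u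

/-! Write `b = aw` and `c = waw = wb`. An equality `x𝒜 = b𝒜` means `x = br` and `b = xs`, which
gives `°(x) = °(b)`; conversely `°(x) ⊆ °(b)` turns any identity `ux = x` into `ub = b`. Given
`xcx = x` with `cx` self-adjoint, `x* = cx·x*`, so the annihilator conditions yield `xcb = b` and
`cxc = c`. These give `bxc = b` (as `c` is also `(wa)w`), i.e. `(bxw)b = b`, and the annihilators
turn this back into `bxwx = x`, which is `a(wx)² = x`. -/

section Ideals

variable {R : Type*}

def rightMultiples [Mul R] (b : R) : Set R := {y | ∃ r, y = b * r}

def leftAnnihilator [Mul R] [Zero R] (b : R) : Set R := {z | z * b = 0}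

theorem rightMultiples_eq_iff [Monoid R] {x b : R} :
    rightMultiples x = rightMultiples b ↔ x ∈ rightMultiples b ∧ b ∈ rightMultiples x := by
  have self_mem (y : R) : y ∈ rightMultiples y := ⟨1, (mul_one y).symm⟩
  have subset_of_mem {y z : R} (h : y ∈ rightMultiples z) : rightMultiples y ⊆ rightMultiples z := by
    rintro _ ⟨r, rfl⟩
    obtain ⟨s, rfl⟩ := h
    exact ⟨s * r, mul_assoc z s r⟩
  refine ⟨fun h => ⟨h ▸ self_mem x, h ▸ self_mem b⟩, fun ⟨hx, hb⟩ => ?_⟩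
  exact (subset_of_mem hx).antisymm (subset_of_mem hb)

theorem leftAnnihilator_subset_of_mem_rightMultiples [SemigroupWithZero R] {x b : R}
    (h : x ∈ rightMultiples b) : leftAnnihilator b ⊆ leftAnnihilator x := by
  obtain ⟨r, rfl⟩ := h
  intro z (hz : z * b = 0)
  show z * (b * r) = 0
  rw [← mul_assoc, hz, zero_mul]

theorem leftAnnihilator_eq_of_rightMultiples_eq [MonoidWithZero R] {x b : R}
    (h : rightMultiples x = rightMultiples b) : leftAnnihilator x = leftAnnihilator b :=
  have ⟨hx, hb⟩ := rightMultiples_eq_iff.1 h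
  (leftAnnihilator_subset_of_mem_rightMultiples hb).antisymm
    (leftAnnihilator_subset_of_mem_rightMultiples hx)

theorem mul_eq_of_leftAnnihilator_subset [Ring R] {x b u : R}
    (h : leftAnnihilator x ⊆ leftAnnihilator b) (hu : u * x = x) : u * b = b := by
  have hx : (1 - u) * x = 0 := by rw [sub_mul, one_mul, hu, sub_self]
  have hb : (1 - u) * b = 0 := h hx
  rwa [sub_mul, one_mul, sub_eq_zero, eq_comm] at hb

end Ideals

section StarRing

variable {R : Type*} [Ring R] [StarRing R] {x c : R}

theorem star_eq_mul_mul_star (hx : x * c * x = x) (hcx : IsSelfAdjoint (c * x)) :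
    star x = c * x * star x :=
  calc star x = star (x * (c * x)) := by rw [← mul_assoc, hx]
    _ = c * x * star x := by rw [star_mul, hcx.star_eq]

theorem rightMultiples_star_eq (hx : x * c * x = x) (hc : c * x * c = c)
    (hcx : IsSelfAdjoint (c * x)) : rightMultiples (star x) = rightMultiples c := by
  refine rightMultiples_eq_iff.2 ⟨⟨x * star x, ?_⟩, ⟨star c * c, ?_⟩⟩
  · rw [← mul_assoc, ← star_eq_mul_mul_star hx hcx]
  · calc c = star (c * x) * c := by rw [hcx.star_eq, hc]
      _ = star x * (star c * c) := by rw [star_mul, mul_assoc]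

theorem mul_mul_self_eq_of_leftAnnihilator_star_subset (hx : x * c * x = x)
    (hcx : IsSelfAdjoint (c * x)) (h : leftAnnihilator (star x) ⊆ leftAnnihilator c) :
    c * x * c = c :=
  mul_eq_of_leftAnnihilator_subset h (star_eq_mul_mul_star hx hcx).symm

end StarRing

section Weighted

variable {R : Type*} [Ring R] {w a x : R}

theorem mul_weighted_mul_eq_of_mul_sq (h₁ : a * (w * x) ^ 2 = x)
    (h₃ : x * (w * a * w) * (a * w) = a * w) : x * (w * a * w) * x = x := by
  linear_combination (norm := noncomm_ring) h₁ - x * (w * a * w) * h₁ + h₃ * (x * w * x)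

theorem mul_mul_weighted_eq_of_mul_sq (h₁ : a * (w * x) ^ 2 = x)
    (h₃ : x * (w * a * w) * (a * w) = a * w) : a * w * x * (w * a * w) = a * w := by
  linear_combination (norm := noncomm_ring) h₃ - a * w * x * w * h₃ + h₁ * (w * a * w * a * w)

-- `d = b - b x c` is fixed by `x c` and killed by `c = (w a) w`, since `w d = c - c x c = 0`.
theorem mul_mul_weighted_eq_of_weighted_mul_mul (h₃ : x * (w * a * w) * (a * w) = a * w)
    (hc : w * a * w * x * (w * a * w) = w * a * w) : a * w * x * (w * a * w) = a * w := by
  linear_combination (norm := noncomm_ring) h₃ - h₃ * (x * (w * a * w)) + x * w * a * hc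

end Weighted

namespace IsWCoreInv

variable {R : Type*} [NormedRing R] [StarRing R] {w a x : R}

theorem mul_weighted_mul_right (h : IsWCoreInv w a x) :
    x * (w * a * w) * (a * w) = a * w := by
  simpa only [sq, mul_assoc] using h.2.2

theorem mul_weighted_mul_self (h : IsWCoreInv w a x) : x * w * a * w * x = x := by
  simpa only [mul_assoc] using mul_weighted_mul_eq_of_mul_sq h.1 h.mul_weighted_mul_right

theorem rightMultiples_eq (h : IsWCoreInv w a x) : rightMultiples x = rightMultiples (a * w) :=
  rightMultiples_eq_iff.2 ⟨⟨x * w * x, h.1.symm.trans (by noncomm_ring)⟩,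
    ⟨w * a * w * (a * w), by rw [← mul_assoc, h.mul_weighted_mul_right]⟩⟩

theorem rightMultiples_star_eq (h : IsWCoreInv w a x) :
    rightMultiples (star x) = rightMultiples (w * a * w) := by
  have hb := mul_mul_weighted_eq_of_mul_sq h.1 h.mul_weighted_mul_right
  have hx : x * (w * a * w) * x = x := by simpa only [mul_assoc] using h.mul_weighted_mul_self
  have hc : w * a * w * x * (w * a * w) = w * a * w := by
    simpa only [mul_assoc] using congrArg (w * ·) hb
  exact _root_.rightMultiples_star_eq hx hc h.2.1

end IsWCoreInv

theorem isWCoreInv_of_leftAnnihilator {R : Type*} [NormedRing R] [StarRing R] {w a x : R}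
    (hx : x * w * a * w * x = x) (hcx : star (w * a * w * x) = w * a * w * x)
    (hann : leftAnnihilator x = leftAnnihilator (a * w))
    (hann_star : leftAnnihilator (star x) ⊆ leftAnnihilator (w * a * w)) : IsWCoreInv w a x := by
  have hx' : x * (w * a * w) * x = x := by simpa only [mul_assoc] using hx
  have h₃ : x * (w * a * w) * (a * w) = a * w := mul_eq_of_leftAnnihilator_subset hann.subset hx'
  have hc := mul_mul_self_eq_of_leftAnnihilator_star_subset hx' hcx hann_star
  have hb := mul_mul_weighted_eq_of_weighted_mul_mul h₃ (by simpa only [mul_assoc] using hc)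
  have h₁ : a * w * x * w * x = x :=
    mul_eq_of_leftAnnihilator_subset hann.superset (by simpa only [mul_assoc] using hb)
  exact ⟨by simpa only [sq, mul_assoc] using h₁, hcx, by simpa only [sq, mul_assoc] using h₃⟩

variable {A : Type*} [NormedRing A] [NormedAlgebra ℂ A] [StarRing A] [StarModule ℂ A]
  [CompleteSpace A]

/-- Theorem 2.1. -/
theorem wCoreInv_tfae (w a x : A) :
    List.TFAE
      [ IsWCoreInv w a x,
        x * w * a * w * x = x ∧ star (w * a * w * x) = w * a * w * x ∧
          {y : A | ∃ r, y = x * r} = {y : A | ∃ r, y = a * w * r} ∧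
          {y : A | ∃ r, y = star x * r} = {y : A | ∃ r, y = w * a * w * r},
        x * w * a * w * x = x ∧ star (w * a * w * x) = w * a * w * x ∧
          {z : A | z * x = 0} = {z : A | z * (a * w) = 0} ∧
          {z : A | z * star x = 0} = {z : A | z * (w * a * w) = 0},
        x * w * a * w * x = x ∧ star (w * a * w * x) = w * a * w * x ∧
          {z : A | z * x = 0} = {z : A | z * (a * w) = 0} ∧
          {z : A | z * star x = 0} ⊆ {z : A | z * (w * a * w) = 0} ] := by
  tfae_have 1 → 2 := fun h =>
    ⟨h.mul_weighted_mul_self, h.2.1, h.rightMultiples_eq, h.rightMultiples_star_eq⟩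
  tfae_have 2 → 3 := fun ⟨hx, hcx, hx_ideal, hx_star_ideal⟩ =>
    ⟨hx, hcx, leftAnnihilator_eq_of_rightMultiples_eq hx_ideal,
      leftAnnihilator_eq_of_rightMultiples_eq hx_star_ideal⟩
  tfae_have 3 → 4 := fun ⟨hx, hcx, hann, hann_star⟩ => ⟨hx, hcx, hann, hann_star.subset⟩
  tfae_have 4 → 1 := fun ⟨hx, hcx, hann, hann_star⟩ =>
    isWCoreInv_of_leftAnnihilator hx hcx hann hann_star
  tfae_finish
end

section
/- Let a, x ∈ 𝒜. Then x is the w-weighted core inverse of a if and only if a(wx)² = x, xw(aw)² = aw, ((waw)x)* = (waw)x, (waw)x(waw) = waw, and x(waw)x = x. -/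
open Filter

section WeightedCoreEquations

variable {M : Type*} [Monoid M] {w a x : M}

theorem waw_mul_mul_waw_eq_waw (h₁ : a * (w * x) ^ 2 = x) (h₃ : x * w * (a * w) ^ 2 = a * w) :
    w * a * w * x * (w * a * w) = w * a * w := by
  simp only [sq, mul_assoc] at h₁ h₃
  calc w * a * w * x * (w * a * w)
      = w * a * w * x * (w * (x * (w * (a * (w * (a * w)))))) := by
        rw [h₃]; simp only [mul_assoc]
    _ = w * (a * (w * (x * (w * x)))) * (w * (a * (w * (a * w)))) := by simp only [mul_assoc]
    _ = w * (x * (w * (a * (w * (a * w))))) := by rw [h₁]; simp only [mul_assoc]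
    _ = w * a * w := by rw [h₃, mul_assoc]

theorem mul_waw_mul_eq_self (h₁ : a * (w * x) ^ 2 = x) (h₃ : x * w * (a * w) ^ 2 = a * w) :
    x * (w * a * w) * x = x := by
  simp only [sq, mul_assoc] at h₁ h₃
  calc x * (w * a * w) * x
      = x * (w * a * w) * (a * (w * (x * (w * x)))) := by rw [h₁]
    _ = x * (w * (a * (w * (a * w)))) * (x * (w * x)) := by simp only [mul_assoc]
    _ = x := by rw [h₃, mul_assoc, h₁]

end WeightedCoreEquations

variable {A : Type*} [NormedRing A] [NormedAlgebra ℂ A] [StarRing A] [StarModule ℂ A]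
  [CompleteSpace A]

/-- Corollary 2.3. -/
theorem isWCoreInv_iff (w a x : A) :
    IsWCoreInv w a x ↔
      a * (w * x) ^ 2 = x ∧ x * w * (a * w) ^ 2 = a * w ∧
        star (w * a * w * x) = w * a * w * x ∧
        w * a * w * x * (w * a * w) = w * a * w ∧
        x * (w * a * w) * x = x := by
  constructor
  · rintro ⟨h₁, hstar, h₃⟩
    exact ⟨h₁, h₃, hstar, waw_mul_mul_waw_eq_waw h₁ h₃, mul_waw_mul_eq_self h₁ h₃⟩
  · rintro ⟨h₁, h₃, hstar, -, -⟩
    exact ⟨h₁, hstar, h₃⟩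
end

section
/- Let a ∈ 𝒜. Then a has a w-weighted core inverse if and only if aw has a group inverse and waw has a (1,3)-inverse. Moreover, if g is the group inverse of aw and u is a (1,3)-inverse of waw, then g·(aw)·u is the w-weighted core inverse of a. -/
/-!
With `b = a * w` and `y = x * w`, the first and third weighted core equations give
`b * y * y = y` and `y * b * b = b`; these alone force `b` to be group invertible with
`b^# = y * y * b`, while the hermitian equation makes `x` itself a (1,3)-inverse of `w * b`.
Conversely, `b^#` lets one cancel the leading `a` in `w * a * w = w * b`, so a (1,3)-inverse `u`
of `w * a * w` satisfies `b * u * (w * b) = b`, and `b^# * b * u` is checked to satisfy the three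
defining equations.
-/

open Filter

section GroupInverse

variable {R : Type*} [Ring R] {b g y : R}

theorem IsGroupInv.inv_mul_mul_self (h : IsGroupInv b g) : g * b * b = b := by
  rw [← h.2.2]; exact h.1

theorem IsGroupInv.mul_inv_mul_inv (h : IsGroupInv b g) : b * g * g = g := by
  rw [h.2.2]; exact h.2.1

theorem mul_mul_eq_self_of_mul_mul_self_eq (hy : b * y * y = y) (hb : y * b * b = b) :
    b * y * b = b :=
  calc b * y * b = b * y * (y * b * b) := by rw [hb]
    _ = (b * y * y) * b * b := by noncomm_ring
    _ = b := by rw [hy, hb]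

theorem mul_mul_eq_self_of_mul_mul_self_eq' (hy : b * y * y = y) (hb : y * b * b = b) :
    y * b * y = y :=
  calc y * b * y = y * b * (b * y * y) := by rw [hy]
    _ = (y * b * b) * y * y := by noncomm_ring
    _ = y := by rw [hb, hy]

theorem isGroupInv_mul_self_mul (hy : b * y * y = y) (hb : y * b * b = b) :
    IsGroupInv b (y * y * b) := by
  refine ⟨?_, ?_, ?_⟩
  · calc b * (y * y * b) * b = (b * y * y) * b * b := by noncomm_ring
      _ = b := by rw [hy, hb]
  · calc y * y * b * b * (y * y * b) = y * (y * b * b) * y * y * b := by noncomm_ring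
      _ = (y * b * y) * y * b := by rw [hb]
      _ = y * y * b := by rw [mul_mul_eq_self_of_mul_mul_self_eq' hy hb]
  · calc b * (y * y * b) = (b * y * y) * b := by noncomm_ring
      _ = y * (y * b * b) := by rw [hy, hb]
      _ = y * y * b * b := by noncomm_ring

end GroupInverse

section WeightedCore

variable {R : Type*} [NormedRing R] [StarRing R] {w a x g u : R}

theorem IsWCoreInv.mul_mul_self (hx : IsWCoreInv w a x) :
    a * w * (x * w) * (x * w) = x * w :=
  calc a * w * (x * w) * (x * w) = a * (w * x) ^ 2 * w := by noncomm_ring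
    _ = x * w := by rw [hx.1]

theorem IsWCoreInv.mul_self_mul (hx : IsWCoreInv w a x) :
    x * w * (a * w) * (a * w) = a * w :=
  calc x * w * (a * w) * (a * w) = x * w * (a * w) ^ 2 := by noncomm_ring
    _ = a * w := hx.2.2

theorem IsWCoreInv.isGroupInv (hx : IsWCoreInv w a x) :
    IsGroupInv (a * w) (x * w * (x * w) * (a * w)) :=
  isGroupInv_mul_self_mul hx.mul_mul_self hx.mul_self_mul

theorem IsWCoreInv.is13Inv (hx : IsWCoreInv w a x) : Is13Inv (w * a * w) x := by
  refine ⟨?_, hx.2.1⟩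
  calc w * a * w * x * (w * a * w) = w * (a * w * (x * w) * (a * w)) := by noncomm_ring
    _ = w * a * w := by
      rw [mul_mul_eq_self_of_mul_mul_self_eq hx.mul_mul_self hx.mul_self_mul, mul_assoc]

theorem mul_mul_eq_self_of_isGroupInv_of_is13Inv (hg : IsGroupInv (a * w) g)
    (hu : Is13Inv (w * a * w) u) : a * w * u * (w * (a * w)) = a * w :=
  calc a * w * u * (w * (a * w)) = g * (a * w) * (a * w) * u * (w * (a * w)) := by
        rw [hg.inv_mul_mul_self]
    _ = g * a * (w * a * w * u * (w * a * w)) := by noncomm_ring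
    _ = g * (a * w) * (a * w) := by rw [hu.1]; noncomm_ring
    _ = a * w := hg.inv_mul_mul_self

theorem isWCoreInv_of_isGroupInv_of_is13Inv (hg : IsGroupInv (a * w) g)
    (hu : Is13Inv (w * a * w) u) : IsWCoreInv w a (g * (a * w) * u) := by
  have hcancel := mul_mul_eq_self_of_isGroupInv_of_is13Inv hg hu
  refine ⟨?_, ?_, ?_⟩
  · calc a * (w * (g * (a * w) * u)) ^ 2
          = a * w * g * (a * w) * u * w * g * (a * w) * u := by noncomm_ring
      _ = a * w * u * w * (a * w * g * g) * (a * w) * u := by rw [hg.1, hg.mul_inv_mul_inv]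
      _ = a * w * u * (w * (a * w)) * g * g * (a * w) * u := by noncomm_ring
      _ = g * (a * w) * u := by rw [hcancel, hg.mul_inv_mul_inv]
  · have hwaw : w * a * w * (g * (a * w) * u) = w * a * w * u :=
      calc w * a * w * (g * (a * w) * u) = w * (a * w * g * (a * w)) * u := by noncomm_ring
        _ = w * a * w * u := by rw [hg.1]; noncomm_ring
    rw [hwaw]; exact hu.2
  · calc g * (a * w) * u * w * (a * w) ^ 2 = g * (a * w * u * (w * (a * w))) * (a * w) := by
          noncomm_ring
      _ = a * w := by rw [hcancel]; exact hg.inv_mul_mul_self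

end WeightedCore

variable {A : Type*} [NormedRing A] [NormedAlgebra ℂ A] [StarRing A] [StarModule ℂ A]
  [CompleteSpace A]

/-- Theorem 2.4. -/
theorem isWCoreInv_exists_iff (w a : A) :
    ((∃ x, IsWCoreInv w a x) ↔
      (∃ g, IsGroupInv (a * w) g) ∧ (∃ u, Is13Inv (w * a * w) u)) ∧
    (∀ g u, IsGroupInv (a * w) g → Is13Inv (w * a * w) u →
      IsWCoreInv w a (g * (a * w) * u)) :=
  ⟨⟨fun ⟨x, hx⟩ => ⟨⟨_, hx.isGroupInv⟩, ⟨x, hx.is13Inv⟩⟩,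
    fun ⟨⟨_, hg⟩, ⟨_, hu⟩⟩ => ⟨_, isWCoreInv_of_isGroupInv_of_is13Inv hg hu⟩⟩,
    fun _ _ => isWCoreInv_of_isGroupInv_of_is13Inv⟩
end

section
/- Let a ∈ 𝒜. Then a has a w-weighted core inverse if and only if aw has a group inverse and there exists x ∈ 𝒜 such that x(waw)x = x, (waw)x(waw) = waw, x𝒜 = (aw)𝒜, and x*𝒜 ⊆ (waw)𝒜. -/
/-!
Write `b = aw` and `c = waw = wb`. If `x` is a `w`-weighted core inverse of `a`, then `y = xw`
satisfies `b y² = y` and `y b² = b`, which already makes `y² b` a group inverse of `b`; moreover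
`x = b (xwx)` and `b = x (wb²)`, and `x* = (xcx)* = (cx)* x* = cx x*` lies in `c𝒜`.

Conversely, `x ∣ b` and `xcx = x` give `xcb = b`, and `b ∣ x` gives `bgx = x` for `g = b^#`, so that
`b xwx = b (xcg) x = bgx = x`. Finally `p = cx` satisfies `pc = c` and `(cx)* ∈ c𝒜`, hence
`p p* = p*`; the left side is self-adjoint, so `p* = p`.
-/

open Filter

variable {A : Type*} [NormedRing A] [NormedAlgebra ℂ A] [StarRing A] [StarModule ℂ A]
  [CompleteSpace A]

theorem setOf_mul_subset_setOf_mul_iff {M : Type*} [Monoid M] (x y : M) :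
    {z | ∃ r, z = x * r} ⊆ {z | ∃ r, z = y * r} ↔ y ∣ x :=
  ⟨fun h => h ⟨1, (mul_one x).symm⟩, fun h _ hz => dvd_trans h hz⟩

theorem setOf_mul_eq_setOf_mul_iff {M : Type*} [Monoid M] (x y : M) :
    {z | ∃ r, z = x * r} = {z | ∃ r, z = y * r} ↔ y ∣ x ∧ x ∣ y := by
  rw [Set.Subset.antisymm_iff, setOf_mul_subset_setOf_mul_iff, setOf_mul_subset_setOf_mul_iff]

theorem star_eq_self_of_mul_eq_of_dvd_star {R : Type*} [Semigroup R] [StarMul R] {p c : R}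
    (hp : p * c = c) (hc : c ∣ star p) : star p = p := by
  obtain ⟨u, hu⟩ := hc
  have hpp : p * star p = star p := by rw [hu, ← mul_assoc, hp]
  calc star p = p * star p := hpp.symm
    _ = star (p * star p) := by rw [star_mul, star_star]
    _ = p := by rw [hpp, star_star]

theorem isGroupInv_sq_mul_of_mul_sq_eq {R : Type*} [Ring R] {b y : R}
    (hby : b * y ^ 2 = y) (hyb : y * b ^ 2 = b) : IsGroupInv b (y ^ 2 * b) := by
  refine ⟨?_, ?_, ?_⟩
  · calc b * (y ^ 2 * b) * b = b * y ^ 2 * b ^ 2 := by noncomm_ring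
      _ = b := by rw [hby, hyb]
  · calc y ^ 2 * b * b * (y ^ 2 * b) = y * (y * b ^ 2) * y ^ 2 * b := by noncomm_ring
      _ = y * (b * y ^ 2) * b := by rw [hyb]; noncomm_ring
      _ = y ^ 2 * b := by rw [hby]; noncomm_ring
  · calc b * (y ^ 2 * b) = b * y ^ 2 * b := by noncomm_ring
      _ = y * (y * b ^ 2) := by rw [hby, hyb]
      _ = y ^ 2 * b * b := by noncomm_ring

theorem IsGroupInv.mul_mul_self {R : Type*} [Ring R] {b g : R} (hg : IsGroupInv b g) :
    b * g * g = g := by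
  rw [hg.2.2, hg.2.1]

namespace IsWCoreInv

variable {R : Type*} [NormedRing R] [StarRing R] {w a x : R}

theorem aw_mul_xw_sq (h : IsWCoreInv w a x) : a * w * (x * w) ^ 2 = x * w := by
  calc a * w * (x * w) ^ 2 = a * (w * x) ^ 2 * w := by noncomm_ring
    _ = x * w := by rw [h.1]

theorem aw_mul_xwx (h : IsWCoreInv w a x) : a * w * (x * w * x) = x := by
  calc a * w * (x * w * x) = a * (w * x) ^ 2 := by noncomm_ring
    _ = x := h.1

theorem isGroupInv_s5 (h : IsWCoreInv w a x) :
    IsGroupInv (a * w) ((x * w) ^ 2 * (a * w)) :=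
  isGroupInv_sq_mul_of_mul_sq_eq h.aw_mul_xw_sq h.2.2

theorem aw_dvd (h : IsWCoreInv w a x) : a * w ∣ x :=
  ⟨x * w * x, h.aw_mul_xwx.symm⟩

theorem dvd_aw (h : IsWCoreInv w a x) : x ∣ a * w :=
  ⟨w * (a * w) ^ 2, by rw [← mul_assoc, h.2.2]⟩

theorem mul_waw_mul (h : IsWCoreInv w a x) : x * (w * a * w) * x = x := by
  calc x * (w * a * w) * x = x * (w * a * w) * (a * w * (x * w * x)) := by rw [h.aw_mul_xwx]
    _ = x * w * (a * w) ^ 2 * (x * w * x) := by noncomm_ring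
    _ = x := by rw [h.2.2, h.aw_mul_xwx]

theorem waw_mul_mul_waw (h : IsWCoreInv w a x) :
    w * a * w * x * (w * a * w) = w * a * w := by
  calc w * a * w * x * (w * a * w) = w * (a * w * (x * w) * (x * w * (a * w) ^ 2)) := by
        rw [h.2.2]; noncomm_ring
    _ = w * (a * w * (x * w) ^ 2 * (a * w) ^ 2) := by noncomm_ring
    _ = w * a * w := by rw [h.aw_mul_xw_sq, h.2.2]; noncomm_ring

theorem waw_dvd_star (h : IsWCoreInv w a x) : w * a * w ∣ star x := by
  refine ⟨x * star x, ?_⟩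
  calc star x = star (x * (w * a * w * x)) := by rw [← mul_assoc x, h.mul_waw_mul]
    _ = w * a * w * x * star x := by rw [star_mul, h.2.1]
    _ = w * a * w * (x * star x) := mul_assoc _ _ _

end IsWCoreInv

theorem isWCoreInv_of_isGroupInv {R : Type*} [NormedRing R] [StarRing R] {w a x g : R}
    (hg : IsGroupInv (a * w) g) (hxcx : x * (w * a * w) * x = x)
    (hcxc : w * a * w * x * (w * a * w) = w * a * w) (hxb : x ∣ a * w) (hbx : a * w ∣ x)
    (hc : w * a * w ∣ star x) : IsWCoreInv w a x := by
  obtain ⟨r, hr⟩ := hxb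
  obtain ⟨s, hs⟩ := hbx
  have hxcb : x * (w * a * w) * (a * w) = a * w := by
    rw [hr, ← mul_assoc, hxcx]
  have hbgx : a * w * g * x = x := by
    rw [hs, ← mul_assoc, hg.1]
  have hxcg : x * (w * a * w) * g = g := by
    rw [← hg.mul_mul_self, ← mul_assoc, ← mul_assoc, hxcb]
  refine ⟨?_, ?_, ?_⟩
  · calc a * (w * x) ^ 2 = a * w * x * w * (a * w * g * x) := by rw [hbgx]; noncomm_ring
      _ = a * w * (x * (w * a * w) * g) * x := by noncomm_ring
      _ = x := by rw [hxcg, hbgx]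
  · exact star_eq_self_of_mul_eq_of_dvd_star hcxc (by rw [star_mul]; exact hc.mul_right _)
  · calc x * w * (a * w) ^ 2 = x * (w * a * w) * (a * w) := by noncomm_ring
      _ = a * w := hxcb

/-- Lemma 2.6. -/
theorem isWCoreInv_exists_iff_group_and (w a : A) :
    (∃ x, IsWCoreInv w a x) ↔
      (∃ g, IsGroupInv (a * w) g) ∧
      ∃ x : A, x * (w * a * w) * x = x ∧ w * a * w * x * (w * a * w) = w * a * w ∧
        {y : A | ∃ r, y = x * r} = {y : A | ∃ r, y = a * w * r} ∧
        {y : A | ∃ r, y = star x * r} ⊆ {y : A | ∃ r, y = w * a * w * r} := by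
  simp only [setOf_mul_eq_setOf_mul_iff, setOf_mul_subset_setOf_mul_iff]
  constructor
  · rintro ⟨x, hx⟩
    exact ⟨⟨_, hx.isGroupInv_s5⟩, x, hx.mul_waw_mul, hx.waw_mul_mul_waw, ⟨hx.aw_dvd, hx.dvd_aw⟩,
      hx.waw_dvd_star⟩
  · rintro ⟨⟨g, hg⟩, x, hxcx, hcxc, ⟨hbx, hxb⟩, hc⟩
    exact ⟨x, isWCoreInv_of_isGroupInv hg hxcx hcxc hxb hbx hc⟩
end

section
/- Let a ∈ 𝒜. Then a has a core inverse if and only if a has a group inverse a^# and a has an (a^#, (a^#)*)-inverse; in this case the core inverse a^{⊛} equals the (a^#, (a^#)*)-inverse of a. -/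
open Filter

variable {A : Type*} [NormedRing A] [NormedAlgebra ℂ A] [StarRing A] [StarModule ℂ A]
  [CompleteSpace A]

/-!
Write `p = a a^#`. If `y` is the `(a^#, (a^#)*)`-inverse of `a`, then `q = a y` satisfies
`p q = q` and `q* p = p`, so `q* q = q* p q = p q = q`: `q` is a projection, which is the
hermitian condition; the other two core equations follow from `y a a^# = a^#` and
`y ∈ a^# 𝒜`. Conversely a core inverse `x` yields `a^# = x² a`, and `x` satisfies the
`(a^#, (a^#)*)`-equations, with `x = x x* a* = x x* (a*)² (a^#)*`.
-/

namespace IsGroupInv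

variable {R : Type*} [Ring R] {a g : R}

theorem mul_self_mul_self (hg : IsGroupInv a g) : g * a * a = a := by
  rw [← hg.2.2, hg.1]

theorem self_mul_mul (hg : IsGroupInv a g) : a * g * g = g := by
  rw [hg.2.2, hg.2.1]

end IsGroupInv

namespace IsCoreInv

variable {R : Type*} [Ring R] [StarRing R] {a x : R}

theorem mul_self_mul (hx : IsCoreInv a x) : x * a * x = x := by
  obtain ⟨hax, -, hxa⟩ := hx
  calc x * a * x = x * a * (a * x ^ 2) := by rw [hax]
    _ = x * a ^ 2 * x ^ 2 := by noncomm_ring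
    _ = x := by rw [hxa, hax]

theorem self_mul_groupInv (hx : IsCoreInv a x) : a * (x ^ 2 * a) = x * a := by
  rw [← mul_assoc, hx.1]

theorem groupInv_mul_self (hx : IsCoreInv a x) : x ^ 2 * a * a = x * a := by
  rw [sq, mul_assoc, mul_assoc, ← sq, hx.2.2]

theorem isGroupInv (hx : IsCoreInv a x) : IsGroupInv a (x ^ 2 * a) := by
  refine ⟨?_, ?_, ?_⟩
  · rw [hx.self_mul_groupInv, mul_assoc, ← sq, hx.2.2]
  · calc x ^ 2 * a * a * (x ^ 2 * a) = x * a * x * (x * a) := by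
          rw [hx.groupInv_mul_self]; noncomm_ring
      _ = x ^ 2 * a := by rw [hx.mul_self_mul, ← mul_assoc, sq]
  · rw [hx.self_mul_groupInv, hx.groupInv_mul_self]

theorem isBCInv (hx : IsCoreInv a x) : IsBCInv (x ^ 2 * a) (star (x ^ 2 * a)) a x := by
  have hxa := hx.mul_self_mul
  have hproj : a * x * (x ^ 2 * a) = x ^ 2 * a :=
    calc a * x * (x ^ 2 * a) = a * x ^ 2 * (x * a) := by noncomm_ring
      _ = x ^ 2 * a := by rw [hx.1, ← mul_assoc, sq]
  have hstar_a : star a = star a ^ 2 * star (x ^ 2 * a) := by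
    have h : a = x ^ 2 * a * a ^ 2 := by rw [sq a, ← mul_assoc, hx.isGroupInv.mul_self_mul_self]
    rw [← star_pow, ← star_mul, ← h]
  refine ⟨?_, ?_, ⟨a, ?_⟩, ⟨star x * star a ^ 2, ?_⟩⟩
  · rw [sq, ← mul_assoc, ← mul_assoc, hxa]
  · rw [mul_assoc, ← hx.2.1, ← star_mul, hproj]
  · rw [hx.groupInv_mul_self, hxa]
  · calc x = x * star (a * x) := by rw [hx.2.1, ← mul_assoc, hxa]
      _ = x * star x * star a := by rw [star_mul, mul_assoc]
      _ = x * (star x * star a ^ 2) * star (x ^ 2 * a) := by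
        conv_lhs => rw [hstar_a]
        noncomm_ring

end IsCoreInv

theorem IsBCInv.isCoreInv {R : Type*} [Ring R] [StarRing R] {a g y : R}
    (hg : IsGroupInv a g) (hy : IsBCInv g (star g) a y) : IsCoreInv a y := by
  obtain ⟨hyag, hgay, ⟨s, hy_mem⟩, -⟩ := hy
  have hqp : a * y * (a * g) = a * g := by simp only [mul_assoc] at hyag ⊢; rw [hyag]
  have hpq : a * g * (a * y) = a * y := by rw [← mul_assoc, hg.1]
  have hq_star_p : star (a * y) * (a * g) = a * g := by
    have h := congrArg star hgay
    rw [star_mul, star_mul, star_star] at h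
    rw [hg.2.2, ← mul_assoc, star_mul, mul_assoc (star y), h]
  have hq_self_adjoint : star (a * y) = a * y := by
    have h : star (a * y) * (a * y) = a * y :=
      calc star (a * y) * (a * y) = star (a * y) * (a * g) * (a * y) := by
            rw [mul_assoc, hpq]
        _ = a * y := by rw [hq_star_p, hpq]
    rw [← h]
    exact IsSelfAdjoint.star_mul_self _
  have hqg : a * y * g = g := by rw [← hg.self_mul_mul, ← mul_assoc, hqp]
  refine ⟨?_, hq_self_adjoint, ?_⟩
  · calc a * y ^ 2 = a * y * (g * s * y) := by rw [← hy_mem, sq, mul_assoc]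
      _ = a * y * g * s * y := by noncomm_ring
      _ = y := by rw [hqg, ← hy_mem]
  · calc y * a ^ 2 = y * a * (g * a * a) := by rw [hg.mul_self_mul_self, sq, mul_assoc]
      _ = a := by rw [← mul_assoc, ← mul_assoc, hyag, hg.mul_self_mul_self]

/-- Corollary 2.8. -/
theorem isCoreInv_exists_iff_bcInv (a : A) :
    ((∃ x, IsCoreInv a x) ↔
      ∃ g, IsGroupInv a g ∧ ∃ y, IsBCInv g (star g) a y) ∧
    (∀ g y, IsGroupInv a g → IsBCInv g (star g) a y → IsCoreInv a y) := by
  exact ⟨⟨fun ⟨x, hx⟩ => ⟨x ^ 2 * a, hx.isGroupInv, x, hx.isBCInv⟩,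
      fun ⟨_, hg, y, hy⟩ => ⟨y, hy.isCoreInv hg⟩⟩,
    fun _ _ hg hy => hy.isCoreInv hg⟩
end

section
/- Let a ∈ 𝒜. The following are equivalent: (1) a has a generalized w-weighted core-EP inverse; (2) there exist z, y ∈ 𝒜 such that a = z + y, (wz)*(wy) = 0, ywz = 0, z has a w-weighted core inverse, and y is w-quasinilpotent; (3) there exist z, y ∈ 𝒜 such that a = z + y, ywz = 0, z has a w-weighted core inverse, and y is w-quasinilpotent. In this case a^{⊛d,w} = z^{⊛,w}. -/
/-!
Write `b = aw` and `t = xw`. From `b t² = t` one gets `t = bⁿ tⁿ⁺¹`, hence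
`(bᵏ - t bᵏ⁺¹) t = (bⁿ⁺ᵏ - t bⁿ⁺ᵏ⁺¹) tⁿ t` for every `n`; the root condition of a generalized
core-EP inverse drives the right-hand side to `0`, so `t b t = t` and `t b² t = b t`. Then `bt` is
an idempotent with `(1 - bt) b (bt) = 0`, which is all that is needed to check that
`z = awxwa`, `y = a - z` is the required decomposition, with `(yw)ⁿ⁺¹ = (1 - bt)(bⁿ⁺¹ - t bⁿ⁺²)`.

Conversely, if `ywz = 0` and `u` is the `w`-weighted core inverse of `z`, then `u` already
satisfies the algebraic identities for `z + y`, and with `B = zw + yw` one has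
`Bⁿ⁺¹ - uw Bⁿ⁺² = (1 - uwB)(yw)ⁿ⁺¹`, so the root condition is inherited from `y`.
-/

open Filter

variable {A : Type*} [NormedRing A] [NormedAlgebra ℂ A] [StarRing A] [StarModule ℂ A]
  [CompleteSpace A]

open Topology

section RootTest

variable {R : Type*} [SeminormedRing R]

def TendstoRootNormZero (c : ℕ → R) : Prop :=
  Tendsto (fun n : ℕ => ‖c n‖ ^ (1 / (n : ℝ))) atTop (𝓝 0)

namespace TendstoRootNormZero

variable {c d : ℕ → R}

theorem congr' (hc : TendstoRootNormZero c) (h : c =ᶠ[atTop] d) : TendstoRootNormZero d :=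
  Tendsto.congr' (h.mono fun n hn => by simp only [hn]) hc

theorem tendsto_zero (hc : TendstoRootNormZero c) : Tendsto c atTop (𝓝 0) := by
  refine squeeze_zero_norm' ?_ (tendsto_pow_atTop_nhds_zero_of_lt_one (r := (1 / 2 : ℝ))
    (by norm_num) (by norm_num))
  filter_upwards [hc.eventually_le_const (by norm_num : (0 : ℝ) < 1 / 2),
    eventually_ne_atTop 0] with n hn hn0
  rw [one_div (n : ℝ)] at hn
  calc ‖c n‖ = (‖c n‖ ^ (n : ℝ)⁻¹) ^ n := (Real.rpow_inv_natCast_pow (norm_nonneg _) hn0).symm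
    _ ≤ (1 / 2) ^ n := pow_le_pow_left₀ (by positivity) hn n

theorem of_norm_le (hc : TendstoRootNormZero c) {K L : ℝ} (hK : 0 ≤ K) (hL : 0 ≤ L)
    (h : ∀ᶠ n in atTop, ‖d n‖ ≤ K * L ^ n * ‖c n‖) : TendstoRootNormZero d := by
  have hlim : Tendsto (fun n : ℕ => max K 1 * L * ‖c n‖ ^ (1 / (n : ℝ))) atTop (𝓝 0) := by
    simpa using hc.const_mul (max K 1 * L)
  refine squeeze_zero' (Eventually.of_forall fun n => by positivity) ?_ hlim
  filter_upwards [h, eventually_ne_atTop 0] with n hn hn0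
  have hK1 : K ^ (1 / (n : ℝ)) ≤ max K 1 := by
    rcases le_total K 1 with hK1 | hK1
    · exact (Real.rpow_le_one hK hK1 (by positivity)).trans (le_max_right _ _)
    · calc K ^ (1 / (n : ℝ)) ≤ K ^ (1 : ℝ) := Real.rpow_le_rpow_of_exponent_le hK1
            (div_le_one_of_le₀ (by exact_mod_cast Nat.one_le_iff_ne_zero.mpr hn0) (by positivity))
        _ ≤ max K 1 := by simp
  calc ‖d n‖ ^ (1 / (n : ℝ)) ≤ (K * L ^ n * ‖c n‖) ^ (1 / (n : ℝ)) :=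
        Real.rpow_le_rpow (norm_nonneg _) hn (by positivity)
    _ = K ^ (1 / (n : ℝ)) * L * ‖c n‖ ^ (1 / (n : ℝ)) := by
        rw [Real.mul_rpow (by positivity) (norm_nonneg _), Real.mul_rpow hK (by positivity),
          one_div, Real.pow_rpow_inv_natCast hL hn0]
    _ ≤ max K 1 * L * ‖c n‖ ^ (1 / (n : ℝ)) := by gcongr

theorem const_mul (hc : TendstoRootNormZero c) (s : R) :
    TendstoRootNormZero (fun n => s * c n) :=
  hc.of_norm_le (norm_nonneg s) zero_le_one
    (Eventually.of_forall fun n => by simpa using norm_mul_le s (c n))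

theorem mul_pow (hc : TendstoRootNormZero c) (t : R) :
    TendstoRootNormZero (fun n => c n * t ^ n) := by
  refine hc.of_norm_le zero_le_one (norm_nonneg t) ?_
  filter_upwards [eventually_ne_atTop 0] with n hn
  calc ‖c n * t ^ n‖ ≤ ‖c n‖ * ‖t‖ ^ n :=
        (norm_mul_le _ _).trans (by gcongr; exact norm_pow_le' t (Nat.pos_of_ne_zero hn))
    _ = 1 * ‖t‖ ^ n * ‖c n‖ := by ring

theorem comp_add (hc : TendstoRootNormZero c) (k : ℕ) :
    TendstoRootNormZero (fun n => c (n + k)) := by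
  have hshift := hc.comp (tendsto_add_atTop_nat k)
  refine squeeze_zero' (Eventually.of_forall fun n => by positivity) ?_ hshift
  filter_upwards [tendsto_norm_zero.comp (hc.tendsto_zero.comp (tendsto_add_atTop_nat k))
    |>.eventually_le_const zero_lt_one, eventually_ne_atTop 0] with n hn hn0
  refine Real.rpow_le_rpow_of_exponent_ge' (norm_nonneg _) hn (by positivity) ?_
  push_cast
  gcongr
  simp

end TendstoRootNormZero

end RootTest

section CoreEPAlgebra

variable {R : Type*} [Ring R]

theorem add_pow_succ_sub_mul_add_pow {Z Y U : R} (hYZ : Y * Z = 0) (hUZ : U * Z ^ 2 = Z)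
    (n : ℕ) :
    (Z + Y) ^ (n + 1) - U * (Z + Y) ^ (n + 2) = (1 - U * (Z + Y)) * Y ^ (n + 1) := by
  induction n with
  | zero =>
    calc (Z + Y) ^ (0 + 1) - U * (Z + Y) ^ (0 + 2)
        = Z + Y - (U * Z ^ 2 + U * Z * Y + U * (Y * Z) + U * Y * Y) := by noncomm_ring
      _ = (1 - U * (Z + Y)) * Y ^ (0 + 1) := by rw [hUZ, hYZ]; noncomm_ring
  | succ n ih =>
    have hYnZ : Y ^ (n + 1) * Z = 0 := by rw [pow_succ, mul_assoc, hYZ, mul_zero]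
    calc (Z + Y) ^ (n + 1 + 1) - U * (Z + Y) ^ (n + 1 + 2)
        = ((Z + Y) ^ (n + 1) - U * (Z + Y) ^ (n + 2)) * (Z + Y) := by
          rw [sub_mul, mul_assoc, ← pow_succ, ← pow_succ]
      _ = (1 - U * (Z + Y)) * Y ^ (n + 1 + 1) := by
          rw [ih, mul_assoc, mul_add (Y ^ (n + 1)), hYnZ, zero_add, ← pow_succ]

variable {b t : R}

theorem pow_mul_pow_succ_of_mul_sq (h : b * t ^ 2 = t) (n : ℕ) : b ^ n * t ^ (n + 1) = t := by
  induction n with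
  | zero => simp
  | succ n ih =>
    calc b ^ (n + 1) * t ^ (n + 1 + 1) = b ^ n * (b * t ^ 2) * t ^ n := by
          rw [pow_succ, show n + 1 + 1 = 2 + n by omega, pow_add]; simp only [mul_assoc]
      _ = t := by rw [h, mul_assoc, ← pow_succ', ih]

theorem pow_sub_mul_pow_succ_mul_of_mul_sq (h : b * t ^ 2 = t) (n k : ℕ) :
    (b ^ k - t * b ^ (k + 1)) * t = (b ^ (n + k) - t * b ^ (n + k + 1)) * t ^ n * t := by
  calc (b ^ k - t * b ^ (k + 1)) * t = (b ^ k - t * b ^ (k + 1)) * (b ^ n * t ^ (n + 1)) := by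
        rw [pow_mul_pow_succ_of_mul_sq h n]
    _ = _ := by
        rw [pow_succ t n, sub_mul, sub_mul, sub_mul, show n + k + 1 = k + 1 + n by omega,
          add_comm n k, pow_add b k n, pow_add b (k + 1) n]
        simp only [mul_assoc]

theorem sub_mul_mul_pow_succ_of_mul_sq (h : b * t ^ 2 = t) (h' : t * b ^ 2 * t = b * t) (n : ℕ) :
    (b - b * t * b) ^ (n + 1) = (1 - b * t) * (b ^ (n + 1) - t * b ^ (n + 2)) := by
  have hkill_t : (1 - b * t) * t = 0 := by
    rw [sub_mul, one_mul, mul_assoc, ← sq, h, sub_self]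
  have hkill_bt : (1 - b * t) * b * (b * t) = 0 := by
    calc (1 - b * t) * b * (b * t) = b ^ 2 * t - b * (t * b ^ 2 * t) := by noncomm_ring
      _ = 0 := by rw [h']; noncomm_ring
  have hpow : ∀ m : ℕ, (b - b * t * b) ^ (m + 1) = (1 - b * t) * b ^ (m + 1) := by
    intro m
    induction m with
    | zero => noncomm_ring
    | succ m ih =>
      calc (b - b * t * b) ^ (m + 1 + 1) = (1 - b * t) * b * ((1 - b * t) * b ^ (m + 1)) := by
            rw [pow_succ', ih]; noncomm_ring
        _ = (1 - b * t) * b * b ^ (m + 1) - (1 - b * t) * b * (b * t) * b ^ (m + 1) := by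
            noncomm_ring
        _ = (1 - b * t) * b ^ (m + 1 + 1) := by
            rw [hkill_bt, zero_mul, sub_zero, mul_assoc, ← pow_succ']
  rw [hpow, mul_sub, ← mul_assoc (1 - b * t) t, hkill_t, zero_mul, sub_zero]

end CoreEPAlgebra

theorem pow_sub_mul_pow_succ_mul_eq_zero {R : Type*} [NormedRing R] {b t : R}
    (h : b * t ^ 2 = t) (hc : TendstoRootNormZero fun n => b ^ n - t * b ^ (n + 1)) (k : ℕ) :
    (b ^ k - t * b ^ (k + 1)) * t = 0 := by
  have hconst : Tendsto (fun n => (b ^ (n + k) - t * b ^ (n + k + 1)) * t ^ n * t) atTop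
      (𝓝 ((b ^ k - t * b ^ (k + 1)) * t)) :=
    tendsto_const_nhds.congr fun n => pow_sub_mul_pow_succ_mul_of_mul_sq h n k
  have hzero : Tendsto (fun n => (b ^ (n + k) - t * b ^ (n + k + 1)) * t ^ n * t) atTop (𝓝 0) :=
    by simpa using ((hc.comp_add k).mul_pow t).tendsto_zero.mul_const t
  exact tendsto_nhds_unique hconst hzero

section WeightedInverses

variable {R : Type*} [NormedRing R] [StarRing R] {w a x z y u : R}

theorem IsWCoreInv.isWCoreEPInv_add (hu : IsWCoreInv w z u) (hyz : y * w * z = 0)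
    (hy : IsWQuasinilpotent w y) : IsWCoreEPInv w (z + y) u := by
  obtain ⟨hu_sq, hu_star, hu_core⟩ := hu
  have hywu : y * w * u = 0 := by rw [← hu_sq, ← mul_assoc, hyz, zero_mul]
  refine ⟨?_, ?_, ?_⟩
  · rw [add_mul, hu_sq, show y * (w * u) ^ 2 = y * w * u * (w * u) by noncomm_ring, hywu,
      zero_mul, add_zero]
  · rwa [show w * (z + y) * w * u = w * z * w * u + w * (y * w * u) by noncomm_ring, hywu,
      mul_zero, add_zero]
  · have hYZ : y * w * (z * w) = 0 := by rw [← mul_assoc, hyz, zero_mul]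
    refine (TendstoRootNormZero.const_mul hy (1 - u * w * ((z + y) * w))).congr' ?_
    filter_upwards [eventually_ne_atTop 0] with n hn
    obtain ⟨m, rfl⟩ := Nat.exists_eq_succ_of_ne_zero hn
    rw [add_mul, ← add_pow_succ_sub_mul_add_pow hYZ hu_core m]

theorem IsWCoreEPInv.exists_decomposition (hx : IsWCoreEPInv w a x) :
    ∃ z y : R, a = z + y ∧ star (w * z) * (w * y) = 0 ∧ y * w * z = 0 ∧
      (∃ u, IsWCoreInv w z u) ∧ IsWQuasinilpotent w y := by
  obtain ⟨hx_sq, hx_star, hx_lim⟩ := hx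
  have hbt : a * w * (x * w) ^ 2 = x * w := by
    rw [show a * w * (x * w) ^ 2 = a * (w * x) ^ 2 * w by noncomm_ring, hx_sq]
  have htbt : x * w * (a * w) * (x * w) = x * w := by
    have h := pow_sub_mul_pow_succ_mul_eq_zero hbt hx_lim 0
    rw [pow_zero, zero_add, pow_one, sub_mul, one_mul, sub_eq_zero] at h
    exact h.symm
  have htb2t : x * w * (a * w) ^ 2 * (x * w) = a * w * (x * w) := by
    have h := pow_sub_mul_pow_succ_mul_eq_zero hbt hx_lim 1
    rw [pow_one, sub_mul, sub_eq_zero] at h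
    exact h.symm
  refine ⟨a * w * x * w * a, a - a * w * x * w * a, by abel, ?_, ?_, ⟨x, ?_, ?_, ?_⟩, ?_⟩
  · calc star (w * (a * w * x * w * a)) * (w * (a - a * w * x * w * a))
        = star (w * a) * (w * (a * w * (x * w) - a * w * (x * w * (a * w) * (x * w))) * a) := by
          rw [show w * (a * w * x * w * a) = w * a * w * x * (w * a) by noncomm_ring, star_mul,
            hx_star]
          noncomm_ring
      _ = 0 := by rw [htbt, sub_self, mul_zero, zero_mul, mul_zero]
  · calc (a - a * w * x * w * a) * w * (a * w * x * w * a)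
        = a * w * (a * w * (x * w)) * a - a * w * (x * w * (a * w) ^ 2 * (x * w)) * a := by
          noncomm_ring
      _ = 0 := by rw [htb2t, sub_self]
  · rw [show a * w * x * w * a * (w * x) ^ 2 = a * w * x * w * (a * (w * x) ^ 2) by noncomm_ring,
      hx_sq, show a * w * x * w * x = a * (w * x) ^ 2 by noncomm_ring, hx_sq]
  · rw [show w * (a * w * x * w * a) * w * x = w * a * w * x * (w * a * w * x) by noncomm_ring,
      star_mul, hx_star]
  · calc x * w * (a * w * x * w * a * w) ^ 2
        = x * w * (a * w) * (x * w) * (a * w * (a * w) * (x * w) * (a * w)) := by noncomm_ring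
      _ = x * w * (a * w) ^ 2 * (x * w) * (a * w) := by rw [htbt]; noncomm_ring
      _ = a * w * x * w * a * w := by rw [htb2t]; noncomm_ring
  · refine (TendstoRootNormZero.const_mul hx_lim (1 - a * w * (x * w))).congr' ?_
    filter_upwards [eventually_ne_atTop 0] with n hn
    obtain ⟨m, rfl⟩ := Nat.exists_eq_succ_of_ne_zero hn
    rw [show (a - a * w * x * w * a) * w = a * w - a * w * (x * w) * (a * w) by noncomm_ring,
      sub_mul_mul_pow_succ_of_mul_sq hbt htb2t m]

end WeightedInverses

/-- Theorem 3.1. -/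
theorem isWCoreEPInv_exists_tfae (w a : A) :
    (List.TFAE
      [ ∃ x, IsWCoreEPInv w a x,
        ∃ z y : A, a = z + y ∧ star (w * z) * (w * y) = 0 ∧ y * w * z = 0 ∧
          (∃ u, IsWCoreInv w z u) ∧ IsWQuasinilpotent w y,
        ∃ z y : A, a = z + y ∧ y * w * z = 0 ∧
          (∃ u, IsWCoreInv w z u) ∧ IsWQuasinilpotent w y ]) ∧
    (∀ z y u : A, a = z + y → y * w * z = 0 → IsWCoreInv w z u →
      IsWQuasinilpotent w y → IsWCoreEPInv w a u) := by
  refine ⟨?_, fun z y u hzy hyz hu hy => hzy ▸ hu.isWCoreEPInv_add hyz hy⟩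
  tfae_have 1 → 2 := fun ⟨x, hx⟩ => hx.exists_decomposition
  tfae_have 2 → 3 := fun ⟨z, y, hzy, _, hyz, hu, hy⟩ => ⟨z, y, hzy, hyz, hu, hy⟩
  tfae_have 3 → 1 := fun ⟨z, y, hzy, hyz, ⟨u, hu⟩, hy⟩ => ⟨u, hzy ▸ hu.isWCoreEPInv_add hyz hy⟩
  tfae_finish
end

section
/- Let a ∈ 𝒜 have a generalized w-weighted core-EP inverse a^{⊛d,w} and let b ∈ 𝒜 be w-quasinilpotent with bwa = 0. Then a + b has a generalized w-weighted core-EP inverse, and (a+b)^{⊛d,w} = a^{⊛d,w}. -/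
/-!
Put `p = aw` and `q = bw`. Then `qp = 0`, so `(p + q)ⁿ = ∑_{i+j=n} pⁱ qʲ`, and the residual
`((a+b)w)ⁿ - xw((a+b)w)ⁿ⁺¹` is the Cauchy product of the residuals `pⁱ - xw pⁱ⁺¹` of `a` with the
powers `qʲ`, minus `xw qⁿ⁺¹`. Both factors decay faster than every geometric sequence, and this
is preserved under Cauchy products. The two algebraic conditions hold because `bwx = 0`, which
follows from `x = a(wx)²` and `bwa = 0`.
-/

open Filter

open Topology Finset Asymptotics

def DecaysSuperGeometrically {E : Type*} [Norm E] (f : ℕ → E) : Prop :=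
  ∀ δ : ℝ, 0 < δ → f =O[atTop] fun n => δ ^ n

section SeminormedAddCommGroup

variable {E : Type*} [SeminormedAddCommGroup E] {f g : ℕ → E}

theorem decaysSuperGeometrically_iff_eventually_lt :
    DecaysSuperGeometrically f ↔ ∀ δ : ℝ, 0 < δ → ∀ᶠ n in atTop, ‖f n‖ < δ ^ n := by
  refine ⟨fun h δ hδ => ?_, fun h δ hδ => ?_⟩
  · have hlo := (h (δ / 2) (half_pos hδ)).trans_isLittleO
      (isLittleO_pow_pow_of_lt_left (half_pos hδ).le (half_lt_self hδ))
    filter_upwards [hlo.def (half_pos one_pos)] with n hn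
    rw [Real.norm_of_nonneg (pow_nonneg hδ.le n)] at hn
    linarith [pow_pos hδ n]
  · refine IsBigO.of_bound 1 ((h δ hδ).mono fun n hn => ?_)
    rw [one_mul, Real.norm_of_nonneg (pow_nonneg hδ.le n)]
    exact hn.le

theorem decaysSuperGeometrically_iff_tendsto :
    DecaysSuperGeometrically f ↔ Tendsto (fun n => ‖f n‖ ^ (1 / (n : ℝ))) atTop (𝓝 0) := by
  rw [decaysSuperGeometrically_iff_eventually_lt, NormedAddGroup.tendsto_nhds_zero]
  refine forall₂_congr fun δ hδ => eventually_congr ?_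
  filter_upwards [eventually_ge_atTop 1] with n hn
  rw [Real.norm_of_nonneg (by positivity), one_div,
    Real.rpow_inv_lt_iff_of_pos (norm_nonneg _) hδ.le (by positivity), Real.rpow_natCast]

namespace DecaysSuperGeometrically

theorem exists_pos_bound (hf : DecaysSuperGeometrically f) {δ : ℝ} (hδ : 0 < δ) :
    ∃ C > 0, ∀ n, ‖f n‖ ≤ C * δ ^ n := by
  obtain ⟨C, hC, hbound⟩ := bound_of_isBigO_nat_atTop (hf δ hδ)
  refine ⟨C, hC, fun n => ?_⟩
  simpa [abs_of_pos hδ] using hbound (pow_ne_zero n hδ.ne')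

theorem sub (hf : DecaysSuperGeometrically f) (hg : DecaysSuperGeometrically g) :
    DecaysSuperGeometrically fun n => f n - g n :=
  fun δ hδ => (hf δ hδ).sub (hg δ hδ)

theorem comp_succ (hf : DecaysSuperGeometrically f) :
    DecaysSuperGeometrically fun n => f (n + 1) := by
  intro δ hδ
  have hshift : (fun n => δ ^ (n + 1)) =O[atTop] fun n => δ ^ n := by
    simpa only [pow_succ'] using isBigO_const_mul_self δ (fun n => δ ^ n) atTop
  exact ((hf δ hδ).comp_tendsto (tendsto_add_atTop_nat 1)).trans hshift

end DecaysSuperGeometrically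

end SeminormedAddCommGroup

namespace DecaysSuperGeometrically

variable {R : Type*} [SeminormedRing R] {f g : ℕ → R}

theorem const_mul (hf : DecaysSuperGeometrically f) (c : R) :
    DecaysSuperGeometrically fun n => c * f n :=
  fun δ hδ => (hf δ hδ).const_mul_left c

/-- The factor `n + 1` counting the terms is absorbed by halving the ratio. -/
theorem sum_antidiagonal_mul (hf : DecaysSuperGeometrically f)
    (hg : DecaysSuperGeometrically g) :
    DecaysSuperGeometrically fun n => ∑ ij ∈ antidiagonal n, f ij.1 * g ij.2 := by
  intro δ hδ
  obtain ⟨C, hC, hfC⟩ := hf.exists_pos_bound (half_pos hδ)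
  obtain ⟨D, hD, hgD⟩ := hg.exists_pos_bound (half_pos hδ)
  refine IsBigO.of_bound (C * D) (Eventually.of_forall fun n => ?_)
  have hcard : ((n : ℝ) + 1) * (δ / 2) ^ n ≤ δ ^ n := by
    have h2n : (n : ℝ) + 1 ≤ 2 ^ n := by exact_mod_cast Nat.lt_two_pow_self
    calc ((n : ℝ) + 1) * (δ / 2) ^ n ≤ 2 ^ n * (δ / 2) ^ n := by gcongr
      _ = δ ^ n := by rw [← mul_pow, mul_div_cancel₀ δ two_ne_zero]
  calc ‖∑ ij ∈ antidiagonal n, f ij.1 * g ij.2‖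
      ≤ ∑ ij ∈ antidiagonal n, C * (δ / 2) ^ ij.1 * (D * (δ / 2) ^ ij.2) :=
        norm_sum_le_of_le _ fun ij _ => (norm_mul_le _ _).trans <|
          mul_le_mul (hfC _) (hgD _) (norm_nonneg _) (by positivity)
    _ = ∑ _ij ∈ antidiagonal n, C * D * (δ / 2) ^ n := by
        refine sum_congr rfl fun ij hij => ?_
        rw [← mem_antidiagonal.1 hij, pow_add]
        ring
    _ = C * D * (((n : ℝ) + 1) * (δ / 2) ^ n) := by
        rw [sum_const, Nat.card_antidiagonal, nsmul_eq_mul]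
        push_cast
        ring
    _ ≤ C * D * ‖δ ^ n‖ := by
        rw [Real.norm_of_nonneg (pow_nonneg hδ.le n)]
        gcongr

end DecaysSuperGeometrically

section Semiring

variable {R : Type*} [Semiring R] {p q : R}

theorem mul_add_pow_of_mul_eq_zero (h : q * p = 0) (n : ℕ) : q * (p + q) ^ n = q ^ (n + 1) := by
  induction n with
  | zero => simp
  | succ n ih => rw [pow_succ', ← mul_assoc, mul_add, h, zero_add, mul_assoc, ih, ← pow_succ']

theorem add_pow_of_mul_eq_zero (h : q * p = 0) (n : ℕ) :
    (p + q) ^ n = ∑ ij ∈ antidiagonal n, p ^ ij.1 * q ^ ij.2 := by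
  induction n with
  | zero => simp
  | succ n ih =>
    rw [Nat.sum_antidiagonal_succ, pow_succ', add_mul, mul_add_pow_of_mul_eq_zero h, ih, mul_sum]
    simp only [pow_zero, one_mul, pow_succ', mul_assoc]
    exact add_comm _ _

end Semiring

theorem add_pow_sub_mul_add_pow_succ_of_mul_eq_zero {R : Type*} [Ring R] {p q : R}
    (h : q * p = 0) (c : R) (n : ℕ) :
    (p + q) ^ n - c * (p + q) ^ (n + 1) =
      ∑ ij ∈ antidiagonal n, (p ^ ij.1 - c * p ^ (ij.1 + 1)) * q ^ ij.2 - c * q ^ (n + 1) := by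
  rw [pow_succ', add_mul, mul_add_pow_of_mul_eq_zero h, add_pow_of_mul_eq_zero h, mul_add,
    mul_sum, mul_sum]
  simp only [sub_mul, sum_sub_distrib, pow_succ', mul_assoc]
  abel

variable {A : Type*} [NormedRing A] [NormedAlgebra ℂ A] [StarRing A] [StarModule ℂ A]
  [CompleteSpace A]

/-- Corollary 3.2. -/
theorem isWCoreEPInv_add_wQuasinilpotent (w a b x : A)
    (ha : IsWCoreEPInv w a x) (hb : IsWQuasinilpotent w b) (hba : b * w * a = 0) :
    IsWCoreEPInv w (a + b) x := by
  obtain ⟨hx, hsa, hlim⟩ := ha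
  have hbwx : b * w * x = 0 := by rw [← hx, ← mul_assoc, hba, zero_mul]
  have hqp : b * w * (a * w) = 0 := by rw [← mul_assoc, hba, zero_mul]
  refine ⟨?_, ?_, ?_⟩
  · rw [add_mul, hx, sq, ← mul_assoc, ← mul_assoc b w x, hbwx, zero_mul, add_zero]
  · have hw : w * (a + b) * w * x = w * a * w * x := by
      rw [mul_add, add_mul, add_mul, mul_assoc (w * b), mul_assoc w b, ← mul_assoc b, hbwx,
        mul_zero, add_zero]
    rwa [hw]
  · have hp := decaysSuperGeometrically_iff_tendsto.2 hlim
    have hq := (decaysSuperGeometrically_iff_tendsto (f := fun n => (b * w) ^ n)).2 hb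
    refine decaysSuperGeometrically_iff_tendsto.1 ?_
    simp_rw [add_mul a b w, add_pow_sub_mul_add_pow_succ_of_mul_eq_zero hqp]
    exact (hp.sum_antidiagonal_mul hq).sub (hq.comp_succ.const_mul (x * w))
end

section
/- Let a ∈ 𝒜. The following are equivalent: (1) a has a generalized core-EP inverse; (2) there exist z, y ∈ 𝒜 such that a = z + y, z*y = 0, yz = 0, z has a core inverse, and y is quasinilpotent; (3) there exist z, y ∈ 𝒜 such that a = z + y, yz = 0, z has a core inverse, and y is quasinilpotent. In this case a^{⊛d} = z^{⊛}. -/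
open Filter

/-!
If `x = a^{⊛d}`, then for every `n ≥ 1` the element `a x - x a a x` equals `(aⁿ - x aⁿ⁺¹) xⁿ`,
whose norm decays faster than any geometric sequence, so `x a a x = a x` and hence
`x a x = x a (a x²) = x`. Then `z = a x a` has core inverse `x`, and `y = a - a x a = a (1 - x a)`
satisfies `yⁿ⁺¹ = a (1 - x a) aⁿ (1 - x a)` with `(1 - x a) aⁿ = aⁿ - x aⁿ⁺¹`, so `y` is
quasinilpotent. Conversely, if `a = z + y` with `y z = 0` and `u = z^⊛`, then `y u = y z u² = 0`
and `(1 - u a) z = 0`, so `aⁿ - u aⁿ⁺¹ = (1 - u a) (z + y)ⁿ = (1 - u a) yⁿ`.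
-/

open Topology

section RootDecay

theorem tendsto_rpow_one_div_nhds_zero_iff {b : ℕ → ℝ} (hb0 : ∀ n, 0 ≤ b n) :
    Tendsto (fun n : ℕ => b n ^ (1 / (n : ℝ))) atTop (𝓝 0) ↔
      ∀ ε > 0, ∀ᶠ n in atTop, b n ≤ ε ^ n := by
  constructor
  · intro h ε hε
    filter_upwards [h.eventually (gt_mem_nhds hε), eventually_ne_atTop 0] with n hlt hn
    calc b n = (b n ^ (1 / (n : ℝ))) ^ n := by rw [one_div, Real.rpow_inv_natCast_pow (hb0 n) hn]
      _ ≤ ε ^ n := pow_le_pow_left₀ (Real.rpow_nonneg (hb0 n) _) hlt.le n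
  · intro h
    refine tendsto_order.2 ⟨fun ε hε => .of_forall fun n => hε.trans_le (Real.rpow_nonneg (hb0 n) _),
      fun ε hε => ?_⟩
    filter_upwards [h (ε / 2) (half_pos hε), eventually_ne_atTop 0] with n hle hn
    calc b n ^ (1 / (n : ℝ)) ≤ ((ε / 2) ^ n) ^ (1 / (n : ℝ)) :=
          Real.rpow_le_rpow (hb0 n) hle (by positivity)
      _ = ε / 2 := by rw [one_div, Real.pow_rpow_inv_natCast (by positivity) hn]
      _ < ε := half_lt_self hε

theorem tendsto_rpow_one_div_nhds_zero_of_le_mul_shift {b c : ℕ → ℝ} (hb0 : ∀ n, 0 ≤ b n)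
    (hc0 : ∀ n, 0 ≤ c n) (hb : Tendsto (fun n : ℕ => b n ^ (1 / (n : ℝ))) atTop (𝓝 0))
    (C : ℝ) (k : ℕ) (hcb : ∀ n, c (n + k) ≤ C * b n) :
    Tendsto (fun n : ℕ => c n ^ (1 / (n : ℝ))) atTop (𝓝 0) := by
  rw [tendsto_rpow_one_div_nhds_zero_iff hb0] at hb
  rw [tendsto_rpow_one_div_nhds_zero_iff hc0]
  intro ε hε
  -- comparing `b` with `(ε / 2)ⁿ` leaves a factor `2ⁿ` to absorb `C`
  have hC2 : ∀ᶠ n : ℕ in atTop, C ≤ ε ^ k * 2 ^ n :=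
    ((tendsto_pow_atTop_atTop_of_one_lt one_lt_two).const_mul_atTop
      (pow_pos hε k)).eventually_ge_atTop C
  have hshift : ∀ᶠ n : ℕ in atTop, c (n + k) ≤ ε ^ (n + k) := by
    filter_upwards [hb (ε / 2) (half_pos hε), hC2] with n hbn hCn
    calc c (n + k) ≤ C * b n := hcb n
      _ ≤ (ε ^ k * 2 ^ n) * (ε / 2) ^ n := mul_le_mul hCn hbn (hb0 n) (by positivity)
      _ = ε ^ (n + k) := by rw [div_pow, pow_add]; field_simp
  filter_upwards [(tendsto_sub_atTop_nat k).eventually hshift, eventually_ge_atTop k] with m hm hkm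
  rwa [Nat.sub_add_cancel hkm] at hm

theorem eq_zero_of_norm_le_mul_pow {E : Type*} [NormedAddCommGroup E] {v : E} {b : ℕ → ℝ}
    (hb0 : ∀ n, 0 ≤ b n) (hb : Tendsto (fun n : ℕ => b n ^ (1 / (n : ℝ))) atTop (𝓝 0))
    {M : ℝ} (hM : 0 ≤ M) (hv : ∀ᶠ n in atTop, ‖v‖ ≤ b n * M ^ n) : v = 0 := by
  have hδ : (0 : ℝ) < 1 / (2 * (M + 1)) := by positivity
  have hv' : ∀ᶠ n in atTop, ‖v‖ ≤ (1 / 2 : ℝ) ^ n := by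
    filter_upwards [(tendsto_rpow_one_div_nhds_zero_iff hb0).1 hb _ hδ, hv] with n hbn hvn
    calc ‖v‖ ≤ b n * M ^ n := hvn
      _ ≤ (1 / (2 * (M + 1))) ^ n * (M + 1) ^ n :=
          mul_le_mul hbn (pow_le_pow_left₀ hM (by linarith) n) (by positivity) (by positivity)
      _ = (1 / 2) ^ n := by rw [← mul_pow]; congr 1; field_simp
  exact norm_le_zero_iff.1 <|
    ge_of_tendsto (tendsto_pow_atTop_nhds_zero_of_lt_one (by norm_num) (by norm_num)) hv'

end RootDecay

section Ring

variable {R : Type*} [Ring R]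

theorem pow_mul_pow_succ_of_mul_sq_eq {a x : R} (h : a * x ^ 2 = x) (n : ℕ) :
    a ^ n * x ^ (n + 1) = x := by
  induction n with
  | zero => simp
  | succ n ih =>
    calc a ^ (n + 1) * x ^ (n + 1 + 1) = a * (a ^ n * x ^ (n + 1)) * x := by
          rw [pow_succ' a, pow_succ x (n + 1)]; noncomm_ring
      _ = x := by rw [ih, mul_assoc, ← sq, h]

theorem pow_sub_mul_pow_succ_mul_pow {a x : R} (h : a * x ^ 2 = x) {n : ℕ} (hn : n ≠ 0) :
    (a ^ n - x * a ^ (n + 1)) * x ^ n = a * x - x * a * a * x := by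
  obtain ⟨m, rfl⟩ := Nat.exists_eq_succ_of_ne_zero hn
  have hax : a ^ (m + 1) * x ^ (m + 1) = a * x := by
    rw [pow_succ' a, mul_assoc, pow_mul_pow_succ_of_mul_sq_eq h]
  calc (a ^ (m + 1) - x * a ^ (m + 1 + 1)) * x ^ (m + 1)
      = a ^ (m + 1) * x ^ (m + 1) - x * a * (a ^ (m + 1) * x ^ (m + 1)) := by
        rw [pow_succ' a (m + 1)]; noncomm_ring
    _ = a * x - x * a * a * x := by rw [hax]; noncomm_ring

theorem mul_pow_succ_of_mul_mul_eq {b p : R} (hp : p * b * p = p * b) (hpp : p * p = p) (n : ℕ) :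
    (b * p) ^ (n + 1) = b * (p * b ^ n) * p := by
  induction n with
  | zero => simp [mul_assoc, hpp]
  | succ n ih =>
    rw [pow_succ', ih]
    calc b * p * (b * (p * b ^ n) * p) = b * (p * b * p) * b ^ n * p := by noncomm_ring
      _ = b * (p * b ^ (n + 1)) * p := by rw [hp, pow_succ']; noncomm_ring

theorem mul_add_pow_of_mul_eq_zero_s10 {q z y : R} (hq : q * z = 0) (hyz : y * z = 0) (n : ℕ) :
    q * (z + y) ^ n = q * y ^ n := by
  have hz : ∀ n : ℕ, q * y ^ n * z = 0 := by
    rintro (_ | n)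
    · simpa using hq
    · rw [pow_succ, mul_assoc, mul_assoc, hyz, mul_zero, mul_zero]
  induction n with
  | zero => simp
  | succ n ih => rw [pow_succ, ← mul_assoc, ih, mul_add, hz, zero_add, mul_assoc, ← pow_succ]

end Ring

section NormedRing

variable {R : Type*} [NormedRing R] [StarRing R]

namespace IsCoreEPInv

variable {a x : R}

theorem mul_mul_mul_eq_mul (hx : IsCoreEPInv a x) : x * a * a * x = a * x := by
  obtain ⟨hx1, -, hx3⟩ := hx
  refine (sub_eq_zero.1 <| eq_zero_of_norm_le_mul_pow (fun n => norm_nonneg _) hx3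
    (norm_nonneg x) ?_).symm
  filter_upwards [eventually_ne_atTop 0] with n hn
  rw [← pow_sub_mul_pow_succ_mul_pow hx1 hn]
  exact (norm_mul_le _ _).trans <|
    mul_le_mul_of_nonneg_left (norm_pow_le' x (Nat.pos_of_ne_zero hn)) (norm_nonneg _)

theorem mul_mul_eq (hx : IsCoreEPInv a x) : x * a * x = x := by
  calc x * a * x = x * a * (a * x ^ 2) := by rw [hx.1]
    _ = (x * a * a * x) * x := by noncomm_ring
    _ = x := by rw [hx.mul_mul_mul_eq_mul, mul_assoc, ← sq, hx.1]

theorem isCoreInv_mul_mul (hx : IsCoreEPInv a x) : IsCoreInv (a * x * a) x := by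
  have hxax := hx.mul_mul_eq
  have hzx : a * x * a * x = a * x := by
    rw [show a * x * a * x = a * (x * a * x) by noncomm_ring, hxax]
  refine ⟨?_, by rw [hzx, hx.2.1], ?_⟩
  · rw [sq, ← mul_assoc, hzx, mul_assoc, ← sq, hx.1]
  · calc x * (a * x * a) ^ 2 = (x * a * x) * (a * a * x * a) := by noncomm_ring
      _ = (x * a * a * x) * a := by rw [hxax]; noncomm_ring
      _ = a * x * a := by rw [hx.mul_mul_mul_eq_mul]

theorem star_mul_mul_mul_sub_eq_zero (hx : IsCoreEPInv a x) :
    star (a * x * a) * (a - a * x * a) = 0 := by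
  calc star (a * x * a) * (a - a * x * a) = star a * (a * x * a - a * (x * a * x) * a) := by
        rw [star_mul, hx.2.1]; noncomm_ring
    _ = 0 := by rw [hx.mul_mul_eq, sub_self, mul_zero]

theorem sub_mul_mul_mul_eq_zero (hx : IsCoreEPInv a x) :
    (a - a * x * a) * (a * x * a) = 0 := by
  calc (a - a * x * a) * (a * x * a) = a * (a * x) * a - a * (x * a * a * x) * a := by noncomm_ring
    _ = 0 := by rw [hx.mul_mul_mul_eq_mul, sub_self]

theorem isQuasinilpotent_sub_mul_mul (hx : IsCoreEPInv a x) :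
    IsQuasinilpotent (a - a * x * a) := by
  set p := 1 - x * a
  have hpa : p * a * p = p * a := by
    calc p * a * p = p * a - (a * x - x * a * a * x) * a := by simp only [p]; noncomm_ring
      _ = p * a := by rw [hx.mul_mul_mul_eq_mul, sub_self, zero_mul, sub_zero]
  have hpp : p * p = p := by
    calc p * p = p + (x * a * x - x) * a := by simp only [p]; noncomm_ring
      _ = p := by rw [hx.mul_mul_eq, sub_self, zero_mul, add_zero]
  have hy : a - a * x * a = a * p := by simp only [p]; noncomm_ring
  refine tendsto_rpow_one_div_nhds_zero_of_le_mul_shift (fun n => norm_nonneg _)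
    (fun n => norm_nonneg _) hx.2.2 (‖a‖ * ‖p‖) 1 fun n => ?_
  have hpan : p * a ^ n = a ^ n - x * a ^ (n + 1) := by simp only [p]; rw [pow_succ']; noncomm_ring
  calc ‖(a - a * x * a) ^ (n + 1)‖ = ‖a * (p * a ^ n) * p‖ := by
        rw [hy, mul_pow_succ_of_mul_mul_eq hpa hpp]
    _ ≤ ‖a‖ * ‖p * a ^ n‖ * ‖p‖ := norm_mul₃_le
    _ = ‖a‖ * ‖p‖ * ‖a ^ n - x * a ^ (n + 1)‖ := by rw [hpan]; ring

end IsCoreEPInv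

theorem IsCoreInv.isCoreEPInv_add {z y u : R} (hu : IsCoreInv z u) (hyz : y * z = 0)
    (hy : IsQuasinilpotent y) : IsCoreEPInv (z + y) u := by
  obtain ⟨hu1, hu2, hu3⟩ := hu
  have hyu : y * u = 0 := by rw [← hu1, sq, ← mul_assoc, ← mul_assoc, hyz, zero_mul, zero_mul]
  have hau : (z + y) * u = z * u := by rw [add_mul, hyu, add_zero]
  have hqz : (1 - u * (z + y)) * z = 0 := by
    calc (1 - u * (z + y)) * z = z - u * z ^ 2 - u * (y * z) := by noncomm_ring
      _ = 0 := by rw [hu3, hyz]; noncomm_ring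
  refine ⟨?_, by rw [hau, hu2], ?_⟩
  · rw [sq, ← mul_assoc, hau, mul_assoc, ← sq, hu1]
  · refine tendsto_rpow_one_div_nhds_zero_of_le_mul_shift (fun n => norm_nonneg _)
      (fun n => norm_nonneg _) hy ‖1 - u * (z + y)‖ 0 fun n => ?_
    calc ‖(z + y) ^ n - u * (z + y) ^ (n + 1)‖ = ‖(1 - u * (z + y)) * y ^ n‖ := by
          rw [← mul_add_pow_of_mul_eq_zero_s10 hqz hyz, pow_succ']; noncomm_ring
      _ ≤ ‖1 - u * (z + y)‖ * ‖y ^ n‖ := norm_mul_le _ _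

end NormedRing

variable {A : Type*} [NormedRing A] [NormedAlgebra ℂ A] [StarRing A] [StarModule ℂ A]
  [CompleteSpace A]

/-- Corollary 3.3. -/
theorem isCoreEPInv_exists_tfae (a : A) :
    (List.TFAE
      [ ∃ x, IsCoreEPInv a x,
        ∃ z y : A, a = z + y ∧ star z * y = 0 ∧ y * z = 0 ∧
          (∃ u, IsCoreInv z u) ∧ IsQuasinilpotent y,
        ∃ z y : A, a = z + y ∧ y * z = 0 ∧
          (∃ u, IsCoreInv z u) ∧ IsQuasinilpotent y ]) ∧
    (∀ z y u : A, a = z + y → y * z = 0 → IsCoreInv z u →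
      IsQuasinilpotent y → IsCoreEPInv a u) := by
  refine ⟨?_, fun z y u ha hyz hu hy => ha ▸ hu.isCoreEPInv_add hyz hy⟩
  tfae_have 1 → 2 := fun ⟨x, hx⟩ => ⟨a * x * a, a - a * x * a, (add_sub_cancel _ _).symm,
    hx.star_mul_mul_mul_sub_eq_zero, hx.sub_mul_mul_mul_eq_zero, ⟨x, hx.isCoreInv_mul_mul⟩,
    hx.isQuasinilpotent_sub_mul_mul⟩
  tfae_have 2 → 3 := fun ⟨z, y, ha, _, hyz, hu, hy⟩ => ⟨z, y, ha, hyz, hu, hy⟩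
  tfae_have 3 → 1 := fun ⟨z, y, ha, hyz, ⟨u, hu⟩, hy⟩ => ⟨u, ha ▸ hu.isCoreEPInv_add hyz hy⟩
  tfae_finish
end

section
/- Let a ∈ 𝒜 and let n be a positive integer. Then a has a generalized w-weighted core-EP inverse if and only if (1) a has a w-weighted g-Drazin inverse, and (2) there exists p ∈ 𝒜 with p² = p = p* such that pwa = pwap, pwa is quasinilpotent, and (wa)ⁿ + p is invertible in 𝒜. -/
open Filter

/-!
Write `b = w * a`. The weighted notions reduce to unweighted ones for `b`: `z = w * x` is a
core-EP inverse of `b`, and conversely `x = a * z ^ 2`; likewise for g-Drazin inverses.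

Given a core-EP inverse `z` of `b`, the projection `p = 1 - b * z` makes `b` upper triangular
(`p * b * (1 - p) = 0`), `z` inverts `b` in the corner `(1 - p) A (1 - p)`, and `p * b` is
quasinilpotent because `(p * b) ^ (m + 1) = b * (b ^ m - z * b ^ (m + 1))`. Conversely, from such
a corner inverse `z` the core-EP error is `b ^ m - z * b ^ (m + 1) = (1 - z * b) * (p * b) ^ m`.
The factorisation `b ^ n + p = (1 + b ^ n * p) * (b * (1 - p) + p) ^ n`, whose first factor is a
unit since `(p * b) ^ n` is quasinilpotent, shows that `b ^ n + p` is invertible exactly when `b`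
has a corner inverse. Finally, the g-Drazin inverse is `z + z * X`, where the series
`X = ∑ z ^ (k + 1) * b * (p * b) ^ k * p` solves the Sylvester equation
`b * X = (1 - p) * b * p + X * (p * b)`.
-/

open Asymptotics Topology

def SuperexpDecay {E : Type*} [Norm E] (u : ℕ → E) : Prop :=
  ∀ r : ℝ, 0 < r → u =O[atTop] (r ^ ·)

namespace SuperexpDecay

variable {E : Type*} [NormedAddCommGroup E] {u v : ℕ → E}

theorem of_isBigO (hv : SuperexpDecay v) (huv : u =O[atTop] v) : SuperexpDecay u :=
  fun r hr => huv.trans (hv r hr)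

theorem add (hu : SuperexpDecay u) (hv : SuperexpDecay v) : SuperexpDecay (u + v) :=
  fun r hr => (hu r hr).add (hv r hr)

theorem comp_add_iff (k : ℕ) : SuperexpDecay (fun n => u (n + k)) ↔ SuperexpDecay u := by
  refine forall₂_congr fun r hr => ?_
  have hshift := isBigO_map (k := fun n => n + k) (l := atTop) (f := u) (g := (r ^ ·))
  rw [map_add_atTop_eq_nat] at hshift
  simp_rw [hshift, Function.comp_def, pow_add, mul_comm _ (r ^ k),
    isBigO_const_mul_right_iff (pow_ne_zero k hr.ne')]

theorem of_norm_le_pow_mul {F : Type*} [NormedAddCommGroup F] {f : ℕ → F}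
    (hu : SuperexpDecay u) (ρ : ℝ) (h : ∀ᶠ n in atTop, ‖f n‖ ≤ ρ ^ n * ‖u n‖) :
    SuperexpDecay f := by
  intro r hr
  obtain ⟨C, hC0, hC⟩ := (hu (r / (|ρ| + 1)) (by positivity)).exists_pos
  refine .of_bound C ?_
  filter_upwards [hC.bound, h] with n hn hv
  rw [Real.norm_of_nonneg (by positivity)] at hn
  rw [Real.norm_of_nonneg (pow_nonneg hr.le n)]
  have hρr : |ρ| * (r / (|ρ| + 1)) ≤ r := by
    rw [mul_div_assoc', div_le_iff₀ (by positivity)]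
    nlinarith [abs_nonneg ρ]
  calc ‖f n‖ ≤ |ρ| ^ n * ‖u n‖ :=
        hv.trans <| mul_le_mul_of_nonneg_right ((le_abs_self _).trans (abs_pow ρ n).le)
          (norm_nonneg _)
    _ ≤ |ρ| ^ n * (C * (r / (|ρ| + 1)) ^ n) := by gcongr
    _ = C * (|ρ| * (r / (|ρ| + 1))) ^ n := by ring
    _ ≤ C * r ^ n := by gcongr

theorem eventually_norm_le_pow (hu : SuperexpDecay u) {r : ℝ} (hr : 0 < r) :
    ∀ᶠ n in atTop, ‖u n‖ ≤ r ^ n := by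
  obtain ⟨C, hC⟩ := (hu (r / 2) (by positivity)).bound
  have hC2 : ∀ᶠ n : ℕ in atTop, C ≤ 2 ^ n :=
    (tendsto_pow_atTop_atTop_of_one_lt one_lt_two).eventually_ge_atTop C
  filter_upwards [hC, hC2] with n hn h2
  calc ‖u n‖ ≤ C * ‖(r / 2) ^ n‖ := hn
    _ ≤ 2 ^ n * (r / 2) ^ n := by
      rw [Real.norm_of_nonneg (by positivity)]
      exact mul_le_mul_of_nonneg_right h2 (by positivity)
    _ = r ^ n := by rw [← mul_pow, mul_div_cancel₀ r two_ne_zero]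

theorem tendsto_zero (hu : SuperexpDecay u) : Tendsto u atTop (𝓝 0) :=
  (hu (1 / 2) one_half_pos).trans_tendsto
    (tendsto_pow_atTop_nhds_zero_of_lt_one one_half_pos.le one_half_lt_one)

theorem summable [CompleteSpace E] (hu : SuperexpDecay u) : Summable u :=
  summable_of_isBigO_nat summable_geometric_two (hu (1 / 2) one_half_pos)

end SuperexpDecay

theorem superexpDecay_iff_tendsto {E : Type*} [NormedAddCommGroup E] {u : ℕ → E} :
    SuperexpDecay u ↔ Tendsto (fun n : ℕ => ‖u n‖ ^ (1 / (n : ℝ))) atTop (𝓝 0) := by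
  refine ⟨fun hu => ?_, fun hu r hr => .of_bound 1 ?_⟩
  · refine tendsto_order.2 ⟨fun a ha => .of_forall fun n => ha.trans_le (by positivity),
      fun ε hε => ?_⟩
    filter_upwards [hu.eventually_norm_le_pow (half_pos hε), eventually_ne_atTop 0] with n hn hn0
    calc ‖u n‖ ^ (1 / (n : ℝ)) ≤ ((ε / 2) ^ n) ^ (1 / (n : ℝ)) := by gcongr
      _ = ε / 2 := by rw [one_div, Real.pow_rpow_inv_natCast (half_pos hε).le hn0]
      _ < ε := half_lt_self hε
  · filter_upwards [hu.eventually (gt_mem_nhds hr), eventually_ne_atTop 0] with n hn hn0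
    rw [one_mul, Real.norm_of_nonneg (pow_nonneg hr.le n),
      ← Real.rpow_inv_natCast_pow (norm_nonneg (u n)) hn0, ← one_div]
    gcongr

namespace SuperexpDecay

variable {R : Type*} [NormedRing R] {u : ℕ → R}

theorem const_mul (hu : SuperexpDecay u) (c : R) : SuperexpDecay (fun n => c * u n) :=
  hu.of_isBigO (isBigO_const_mul_self c u atTop)

theorem mul_const (hu : SuperexpDecay u) (c : R) : SuperexpDecay (fun n => u n * c) :=
  hu.of_isBigO <| .of_bound ‖c‖ <| .of_forall fun _ => (norm_mul_le _ _).trans_eq (mul_comm _ _)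

theorem pow_mul (hu : SuperexpDecay u) (z : R) : SuperexpDecay (fun n => z ^ n * u n) :=
  hu.of_norm_le_pow_mul ‖z‖ <| (eventually_ne_atTop 0).mono fun n hn =>
    (norm_mul_le _ _).trans <| by gcongr; exact norm_pow_le' z (Nat.pos_of_ne_zero hn)

theorem mul_pow (hu : SuperexpDecay u) (z : R) : SuperexpDecay (fun n => u n * z ^ n) :=
  hu.of_norm_le_pow_mul ‖z‖ <| (eventually_ne_atTop 0).mono fun n hn =>
    (norm_mul_le _ _).trans <| by
      rw [mul_comm]; gcongr; exact norm_pow_le' z (Nat.pos_of_ne_zero hn)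

end SuperexpDecay

section Quasinilpotent

variable {R : Type*} [NormedRing R]

theorem isQuasinilpotent_iff {t : R} : IsQuasinilpotent t ↔ SuperexpDecay (t ^ ·) :=
  superexpDecay_iff_tendsto.symm

theorem isUnit_one_sub_of_norm_pow_lt_one [CompleteSpace R] {s : R} {N : ℕ}
    (h : ‖s ^ N‖ < 1) : IsUnit (1 - s) := by
  have hc : Commute (1 - s) (∑ i ∈ Finset.range N, s ^ i) :=
    .sum_right _ _ _ fun i _ => (Commute.one_left _).sub_left (Commute.self_pow s i)
  have hu := isUnit_one_sub_of_norm_lt_one h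
  rw [← mul_neg_geom_sum] at hu
  exact (hc.isUnit_mul_iff.1 hu).1

theorem IsQuasinilpotent.isUnit_one_add_pow [CompleteSpace R] {t : R}
    (ht : IsQuasinilpotent t) {n : ℕ} (hn : n ≠ 0) : IsUnit (1 + t ^ n) := by
  obtain ⟨M, hM⟩ := eventually_atTop.1
    ((isQuasinilpotent_iff.1 ht).eventually_norm_le_pow one_half_pos)
  -- `1 - t²ⁿ = (1 + tⁿ) (1 - tⁿ)`, and a high power of `t²ⁿ` has norm below one.
  have hu : IsUnit (1 - t ^ n * t ^ n) := by
    refine isUnit_one_sub_of_norm_pow_lt_one (N := M + 1) ?_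
    rw [← pow_add, ← pow_mul]
    refine (hM _ ?_).trans_lt (pow_lt_one₀ one_half_pos.le one_half_lt_one ?_)
    · nlinarith [Nat.pos_of_ne_zero hn]
    · positivity
  rw [show (1 : R) - t ^ n * t ^ n = (1 + t ^ n) * (1 - t ^ n) by noncomm_ring] at hu
  have hc : Commute (1 + t ^ n) (1 - t ^ n) :=
    (Commute.one_left _).add_left ((Commute.one_right _).sub_right (Commute.refl _))
  exact (hc.isUnit_mul_iff.1 hu).1

end Quasinilpotent

theorem mul_pow_succ_eq {M : Type*} [Monoid M] (a b : M) (n : ℕ) :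
    (a * b) ^ (n + 1) = a * (b * a) ^ n * b := by
  rw [pow_succ, ← mul_assoc, mul_pow_mul]

theorem pow_mul_pow_succ_of_mul_sq_s12 {M : Type*} [Monoid M] {b z : M} (h : b * z ^ 2 = z) (m : ℕ) :
    b ^ m * z ^ (m + 1) = z := by
  induction m with
  | zero => simp
  | succ m ih =>
    have hz : z ^ (m + 1 + 1) = z ^ 2 * z ^ m := by rw [← pow_add]; congr 1; omega
    rw [pow_succ, mul_assoc, hz, ← mul_assoc b, h, ← pow_succ', ih]

theorem isUnit_one_add_mul_comm {R : Type*} [Ring R] {x y : R} (h : IsUnit (1 + y * x)) :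
    IsUnit (1 + x * y) := by
  refine ⟨⟨1 + x * y, 1 - x * ↑h.unit⁻¹ * y, ?_, ?_⟩, rfl⟩
  · calc (1 + x * y) * (1 - x * ↑h.unit⁻¹ * y)
          = 1 + x * y - x * ((1 + y * x) * ↑h.unit⁻¹) * y := by noncomm_ring
      _ = 1 := by simp
  · calc (1 - x * ↑h.unit⁻¹ * y) * (1 + x * y)
          = 1 + x * y - x * (↑h.unit⁻¹ * (1 + y * x)) * y := by noncomm_ring
      _ = 1 := by simp

structure IsCornerInv {R : Type*} [Mul R] (e a x : R) : Prop where
  idem_mul : e * x = x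
  mul_idem : x * e = x
  mul_inv : e * a * x = e
  inv_mul : x * a * e = e

section Triangular

variable {R : Type*} [Ring R] {p b z : R}

theorem IsCornerInv.mul_eq_one_sub (hz : IsCornerInv (1 - p) b z) (hpb : p * b * (1 - p) = 0) :
    b * z = 1 - p :=
  calc b * z = (1 - p) * b * z + p * b * ((1 - p) * z) := by rw [hz.idem_mul]; noncomm_ring
    _ = 1 - p := by rw [hz.mul_inv, ← mul_assoc, hpb, zero_mul, add_zero]

theorem IsCornerInv.compl_mul_eq_zero (hz : IsCornerInv (1 - p) b z) (hp : IsIdempotentElem p) :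
    p * z = 0 := by
  rw [← hz.idem_mul, ← mul_assoc, hp.mul_one_sub_self, zero_mul]

theorem IsCornerInv.mul_compl_eq_zero (hz : IsCornerInv (1 - p) b z) (hp : IsIdempotentElem p) :
    z * p = 0 := by
  rw [← hz.mul_idem, mul_assoc, hp.one_sub_mul_self, mul_zero]

theorem mul_pow_mul_one_sub_eq_zero (hp : IsIdempotentElem p) (hpb : p * b * (1 - p) = 0)
    (k : ℕ) : p * b ^ k * (1 - p) = 0 := by
  induction k with
  | zero => rw [pow_zero, mul_one, hp.mul_one_sub_self]
  | succ k ih =>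
    calc p * b ^ (k + 1) * (1 - p)
        = p * b ^ k * (1 - p) * (b * (1 - p)) + p * b ^ k * (p * b * (1 - p)) := by
          rw [pow_succ]; noncomm_ring
      _ = 0 := by rw [ih, hpb]; simp

theorem mul_mul_self_of_triangular (hpb : p * b * (1 - p) = 0) : p * b * p = p * b := by
  rw [mul_one_sub, sub_eq_zero] at hpb
  exact hpb.symm

theorem mul_pow_succ_of_triangular (hpb : p * b * (1 - p) = 0) (k : ℕ) :
    (p * b) ^ (k + 1) = p * b ^ (k + 1) := by
  induction k with
  | zero => rw [zero_add, pow_one, pow_one]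
  | succ k ih =>
    rw [pow_succ', ih, ← mul_assoc, mul_mul_self_of_triangular hpb, mul_assoc, ← pow_succ']

theorem mul_one_sub_add_pow (hp : IsIdempotentElem p) (hpb : p * b * (1 - p) = 0) (n : ℕ) :
    (b * (1 - p) + p) ^ n = b ^ n * (1 - p) + p := by
  induction n with
  | zero => simp
  | succ n ih =>
    calc (b * (1 - p) + p) ^ (n + 1)
        = b ^ n * (b * (1 - p)) - b ^ n * (p * b * (1 - p)) + b ^ n * ((1 - p) * p)
          + p * b * (1 - p) + p * p := by rw [pow_succ, ih]; noncomm_ring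
      _ = b ^ (n + 1) * (1 - p) + p := by
          rw [hpb, hp.one_sub_mul_self, hp.eq, pow_succ]; noncomm_ring

theorem pow_add_eq_mul_pow (hp : IsIdempotentElem p) (hpb : p * b * (1 - p) = 0) (n : ℕ) :
    b ^ n + p = (1 + b ^ n * p) * (b * (1 - p) + p) ^ n := by
  rw [mul_one_sub_add_pow hp hpb]
  calc b ^ n + p = b ^ n * (1 - p) + p + b ^ n * (p * b ^ n * (1 - p)) + b ^ n * (p * p) := by
        rw [mul_pow_mul_one_sub_eq_zero hp hpb, hp.eq]; noncomm_ring
    _ = (1 + b ^ n * p) * (b ^ n * (1 - p) + p) := by noncomm_ring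

theorem isUnit_mul_one_sub_add_iff (hp : IsIdempotentElem p) (hpb : p * b * (1 - p) = 0) :
    IsUnit (b * (1 - p) + p) ↔ ∃ z, IsCornerInv (1 - p) b z := by
  constructor
  · rintro ⟨s, hs⟩
    set S : R := ↑s⁻¹
    have hSs : S * (b * (1 - p) + p) = 1 := by rw [← hs]; exact s.inv_mul
    have hsS : (b * (1 - p) + p) * S = 1 := by rw [← hs]; exact s.mul_inv
    have hSp : S * p = p :=
      calc S * p = S * (b * (1 - p) + p) * p := by
            rw [mul_assoc, add_mul, mul_assoc, hp.one_sub_mul_self, mul_zero, zero_add, hp.eq]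
        _ = p := by rw [hSs, one_mul]
    have hleft : (1 - p) * b * (1 - p) = (1 - p) * (b * (1 - p) + p) := by
      rw [mul_add, hp.one_sub_mul_self, add_zero, mul_assoc]
    have hright : (1 - p) * b * (1 - p) = b * (1 - p) + p - p := by
      calc (1 - p) * b * (1 - p) = b * (1 - p) - p * b * (1 - p) := by noncomm_ring
        _ = b * (1 - p) + p - p := by rw [hpb]; abel
    have hq := hp.one_sub.eq
    refine ⟨(1 - p) * S * (1 - p), ⟨?_, ?_, ?_, ?_⟩⟩
    · rw [← mul_assoc, ← mul_assoc, hq]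
    · rw [mul_assoc, hq]
    · calc (1 - p) * b * ((1 - p) * S * (1 - p)) = (1 - p) * b * (1 - p) * S * (1 - p) := by
            simp only [mul_assoc]
        _ = 1 - p := by rw [hleft, mul_assoc (1 - p), hsS, mul_one, hq]
    · calc (1 - p) * S * (1 - p) * b * (1 - p) = (1 - p) * S * ((1 - p) * b * (1 - p)) := by
            simp only [mul_assoc]
        _ = 1 - p := by
          rw [hright, mul_sub, mul_assoc, hSs, mul_assoc, hSp, mul_one, hp.one_sub_mul_self,
            sub_zero]
  · rintro ⟨z, hz⟩
    refine ⟨⟨_, z + p, ?_, ?_⟩, rfl⟩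
    · calc (b * (1 - p) + p) * (z + p)
          = b * z - b * (p * z) + b * ((1 - p) * p) + p * z + p * p := by noncomm_ring
        _ = 1 := by
          rw [hz.mul_eq_one_sub hpb, hz.compl_mul_eq_zero hp, hp.one_sub_mul_self, hp.eq]
          noncomm_ring
    · calc (z + p) * (b * (1 - p) + p)
          = z * b * (1 - p) + z * p + p * b * (1 - p) + p * p := by noncomm_ring
        _ = 1 := by
          rw [hz.inv_mul, hz.mul_compl_eq_zero hp, hpb, hp.eq]; noncomm_ring

theorem isUnit_pow_add_iff (hp : IsIdempotentElem p) (hpb : p * b * (1 - p) = 0) {n : ℕ}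
    (hn : n ≠ 0) (hu : IsUnit (1 + (p * b) ^ n)) :
    IsUnit (b ^ n + p) ↔ ∃ z, IsCornerInv (1 - p) b z := by
  obtain ⟨k, rfl⟩ := Nat.exists_eq_succ_of_ne_zero hn
  rw [mul_pow_succ_of_triangular hpb] at hu
  rw [pow_add_eq_mul_pow hp hpb, (isUnit_one_add_mul_comm hu).mul_left_iff, isUnit_pow_iff hn,
    isUnit_mul_one_sub_add_iff hp hpb]

end Triangular

section GDrazin

variable {R : Type*} [NormedRing R] [CompleteSpace R] {p b z : R}

theorem exists_sylvester_solution (hp : IsIdempotentElem p) (hpb : p * b * (1 - p) = 0)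
    (hz : IsCornerInv (1 - p) b z) (ht : IsQuasinilpotent (p * b)) :
    ∃ X, p * X = 0 ∧ X * p = X ∧ b * X = (1 - p) * b * p + X * (p * b) := by
  set t := p * b
  set s : ℕ → R := fun k => z ^ (k + 1) * b * t ^ k * p
  have hs : Summable s := by
    refine ((((isQuasinilpotent_iff.1 ht).const_mul (z * b)).mul_const p).pow_mul z).summable.congr
      fun k => ?_
    simp only [s, pow_succ, mul_assoc]
  have htp : t * p = t := mul_mul_self_of_triangular hpb
  have hpt : p * t = t := by rw [← mul_assoc, hp.eq]
  have hbz : b * z = 1 - p := hz.mul_eq_one_sub hpb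
  have hpz : p * z = 0 := hz.compl_mul_eq_zero hp
  have hb0 : b * s 0 = (1 - p) * b * p := by simp only [s, zero_add, pow_one, pow_zero,
    mul_one, ← mul_assoc, hbz]
  have hqz : ∀ k, (1 - p) * z ^ (k + 1) = z ^ (k + 1) := fun k => by
    rw [pow_succ', ← mul_assoc, hz.idem_mul]
  have hb_succ : ∀ k, b * s (k + 1) = s k * t := fun k =>
    calc b * s (k + 1) = (b * z) * z ^ (k + 1) * b * (t ^ k * (t * p)) := by
          simp only [s, pow_succ' z (k + 1), pow_succ t k, mul_assoc]
      _ = z ^ (k + 1) * b * (t ^ k * t) := by rw [hbz, htp, hqz]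
      _ = s k * t := by simp only [s, mul_assoc, hpt]
  refine ⟨∑' k, s k, ?_, ?_, ?_⟩
  · rw [← hs.tsum_mul_left]
    simp only [s, pow_succ', ← mul_assoc, hpz, zero_mul, tsum_zero]
  · rw [← hs.tsum_mul_right]
    simp only [s, mul_assoc, hp.eq]
  · rw [← hs.tsum_mul_left, (hs.mul_left b).tsum_eq_zero_add, ← hs.tsum_mul_right, hb0]
    simp only [hb_succ]

theorem exists_isGDrazinInv_of_isCornerInv (hp : IsIdempotentElem p) (hpb : p * b * (1 - p) = 0)
    (hz : IsCornerInv (1 - p) b z) (ht : IsQuasinilpotent (p * b)) :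
    ∃ y, IsGDrazinInv b y := by
  obtain ⟨X, hpX, hXp, hbX⟩ := exists_sylvester_solution hp hpb hz ht
  have htp : p * b * p = p * b := mul_mul_self_of_triangular hpb
  have hbz : b * z = 1 - p := hz.mul_eq_one_sub hpb
  have hXq : (1 - p) * X = X := by rw [sub_mul, one_mul, hpX, sub_zero]
  have htX : p * b * X = 0 := by rw [← hXq, ← mul_assoc, hpb, zero_mul]
  have hXz : X * z = 0 := by rw [← hXp, mul_assoc, hz.compl_mul_eq_zero hp, mul_zero]
  have hXb : X * b = X * (p * b) := by rw [← mul_assoc, hXp]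
  have hzbX : z * b * X = X := by rw [← hXq, ← mul_assoc, hz.inv_mul]
  have hzXt : z * X * (p * b) = X - z * b * p :=
    calc z * X * (p * b) = z * (b * X) - z * (1 - p) * b * p := by rw [hbX]; noncomm_ring
      _ = X - z * b * p := by rw [← mul_assoc, hzbX, hz.mul_idem]
  have hby : b * (z + z * X) = 1 - p + X := by
    rw [mul_add, ← mul_assoc, hbz, sub_mul, one_mul, hpX, sub_zero]
  have hyb : (z + z * X) * b = 1 - p + X :=
    calc (z + z * X) * b = z * b * (1 - p) + z * b * p + z * (X * b) := by noncomm_ring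
      _ = 1 - p + X := by rw [hz.inv_mul, hXb, ← mul_assoc, hzXt]; abel
  refine ⟨z + z * X, by rw [hby, hyb], ?_, ?_⟩
  · calc (z + z * X) * b * (z + z * X)
        = z + z * X - p * z - p * z * X + X * z + X * z * X := by rw [hyb]; noncomm_ring
      _ = z + z * X := by rw [hz.compl_mul_eq_zero hp, hXz]; simp
  · have htX' : p * b * (1 - X) = p * b := by rw [mul_sub, mul_one, htX, sub_zero]
    have h : b - b ^ 2 * (z + z * X) = (1 - X) * (p * b) := by
      rw [sq, mul_assoc, hby]
      calc b - b * (1 - p + X) = p * b * p - (b * X - (1 - p) * b * p) := by noncomm_ring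
        _ = (1 - X) * (p * b) := by rw [hbX, htp]; noncomm_ring
    have hpow : ∀ m, ((1 - X) * (p * b)) ^ (m + 1) = (1 - X) * (p * b) ^ (m + 1) := fun m => by
      rw [mul_pow_succ_eq, htX', mul_assoc, ← pow_succ]
    rw [h, isQuasinilpotent_iff, ← SuperexpDecay.comp_add_iff 1]
    simp only [hpow]
    exact (((SuperexpDecay.comp_add_iff 1).2 (isQuasinilpotent_iff.1 ht)).const_mul (1 - X))

end GDrazin

section CoreEP

variable {R : Type*} [NormedRing R] [StarRing R] {p b z : R}

theorem IsCoreEPInv.superexpDecay (h : IsCoreEPInv b z) :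
    SuperexpDecay (fun m => b ^ m - z * b ^ (m + 1)) :=
  superexpDecay_iff_tendsto.2 h.2.2

theorem IsCoreEPInv.mul_pow_succ_mul (h : IsCoreEPInv b z) (j : ℕ) :
    z * b ^ (j + 1) * z = b ^ j * z := by
  -- `bᵐ zᵐ⁺¹ = z` turns the difference into an error term times `zᵐ⁺¹`, for every `m`.
  have key : ∀ m, b ^ j * z - z * b ^ (j + 1) * z
      = (b ^ (m + j) - z * b ^ (m + j + 1)) * z ^ m * z := fun m => by
    rw [add_comm m j, mul_assoc _ (z ^ m), ← pow_succ, sub_mul, add_right_comm j m 1,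
      pow_add b j m, pow_add b (j + 1) m]
    simp only [mul_assoc, pow_mul_pow_succ_of_mul_sq_s12 h.1]
  have hlim :=
    ((((SuperexpDecay.comp_add_iff j).2 h.superexpDecay).mul_pow z).mul_const z).tendsto_zero
  exact (sub_eq_zero.1 (tendsto_nhds_unique (tendsto_const_nhds.congr key) hlim)).symm

theorem IsCoreEPInv.isCornerInv (h : IsCoreEPInv b z) : IsCornerInv (b * z) b z := by
  have hzbz : z * b * z = z := by simpa using h.mul_pow_succ_mul 0
  exact ⟨by rw [mul_assoc, ← sq, h.1], by rw [← mul_assoc, hzbz],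
    by rw [mul_assoc, mul_assoc, ← mul_assoc z, hzbz],
    by rw [← mul_assoc, mul_assoc z, ← sq, h.mul_pow_succ_mul 1, pow_one]⟩

theorem IsCoreEPInv.exists_triangular (h : IsCoreEPInv b z) :
    ∃ p, IsStarProjection p ∧ p * b * (1 - p) = 0 ∧ IsQuasinilpotent (p * b) ∧
      IsCornerInv (1 - p) b z := by
  have hc := h.isCornerInv
  have hq : IsStarProjection (b * z) :=
    ⟨by rw [IsIdempotentElem, ← mul_assoc, hc.mul_inv], h.2.1⟩
  have hpb : (1 - b * z) * b * (1 - (1 - b * z)) = 0 := by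
    rw [sub_sub_cancel]
    calc (1 - b * z) * b * (b * z) = b * (b * z) - b * (z * b * (b * z)) := by noncomm_ring
      _ = 0 := by rw [hc.inv_mul, sub_self]
  refine ⟨1 - b * z, hq.one_sub, hpb, ?_, by rwa [sub_sub_cancel]⟩
  have hpow : ∀ m, ((1 - b * z) * b) ^ (m + 1) = b * (b ^ m - z * b ^ (m + 1)) := fun m => by
    rw [mul_pow_succ_of_triangular hpb, pow_succ' b m]; noncomm_ring
  rw [isQuasinilpotent_iff, ← SuperexpDecay.comp_add_iff 1]
  simp only [hpow]
  exact h.superexpDecay.const_mul b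

theorem IsCornerInv.isCoreEPInv (hz : IsCornerInv (1 - p) b z) (hp : IsSelfAdjoint p)
    (hpb : p * b * (1 - p) = 0) (ht : IsQuasinilpotent (p * b)) : IsCoreEPInv b z := by
  have hbz := hz.mul_eq_one_sub hpb
  refine ⟨by rw [sq, ← mul_assoc, hbz, hz.idem_mul],
    by rw [hbz, star_sub, star_one, hp.star_eq], ?_⟩
  have hzb : (1 - z * b) * (1 - p) = 0 := by rw [sub_mul, one_mul, hz.inv_mul, sub_self]
  have herr : ∀ m, b ^ (m + 1) - z * b ^ (m + 1 + 1) = (1 - z * b) * (p * b) ^ (m + 1) :=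
    fun m => by
      rw [mul_pow_succ_of_triangular hpb]
      calc b ^ (m + 1) - z * b ^ (m + 1 + 1)
          = (1 - z * b) * (1 - p) * b ^ (m + 1) + (1 - z * b) * (p * b ^ (m + 1)) := by
            rw [pow_succ' b (m + 1)]; noncomm_ring
        _ = (1 - z * b) * (p * b ^ (m + 1)) := by rw [hzb, zero_mul, zero_add]
  apply superexpDecay_iff_tendsto.1
  rw [← SuperexpDecay.comp_add_iff 1]
  simp only [herr]
  exact ((SuperexpDecay.comp_add_iff 1).2 (isQuasinilpotent_iff.1 ht)).const_mul _

end CoreEP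

section Weighted

variable {R : Type*} [NormedRing R] {w a : R}

theorem IsWCoreEPInv.isCoreEPInv_mul [StarRing R] {x : R} (h : IsWCoreEPInv w a x) :
    IsCoreEPInv (w * a) (w * x) := by
  obtain ⟨h1, h2, h3⟩ := h
  refine ⟨by rw [mul_assoc, h1], by rwa [← mul_assoc], ?_⟩
  have herr : ∀ m, (w * a) ^ (m + 1) - w * x * (w * a) ^ (m + 1 + 1)
      = w * ((a * w) ^ m - x * w * (a * w) ^ (m + 1)) * a := fun m => by
    rw [mul_pow_succ_eq w a m, mul_pow_succ_eq w a (m + 1)]; noncomm_ring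
  apply superexpDecay_iff_tendsto.1
  rw [← SuperexpDecay.comp_add_iff 1]
  simp only [herr]
  exact ((superexpDecay_iff_tendsto.2 h3).const_mul w).mul_const a

theorem IsCoreEPInv.isWCoreEPInv [StarRing R] {z : R} (h : IsCoreEPInv (w * a) z) :
    IsWCoreEPInv w a (a * z ^ 2) := by
  have hwx : w * (a * z ^ 2) = z := by rw [← mul_assoc, h.1]
  refine ⟨by rw [hwx], by rw [mul_assoc (w * a) w, hwx]; exact h.2.1, ?_⟩
  have herr : ∀ m, (a * w) ^ (m + 1) - a * z ^ 2 * w * (a * w) ^ (m + 1 + 1)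
      = a * (((w * a) ^ m - z * (w * a) ^ (m + 1))
        + z * ((w * a) ^ (m + 1) - z * (w * a) ^ (m + 1 + 1))) * w := fun m => by
    rw [mul_pow_succ_eq a w m, mul_pow_succ_eq a w (m + 1), pow_succ' (w * a) (m + 1)]
    noncomm_ring
  apply superexpDecay_iff_tendsto.1
  rw [← SuperexpDecay.comp_add_iff 1]
  simp only [herr]
  have hE := h.superexpDecay
  exact ((hE.add (((SuperexpDecay.comp_add_iff 1).2 hE).const_mul z)).const_mul a).mul_const w

theorem IsGDrazinInv.isWGDrazinInv {y : R} (h : IsGDrazinInv (w * a) y) :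
    IsWGDrazinInv w a (a * y ^ 2) := by
  obtain ⟨hc, hyby, hq⟩ := h
  have hby2 : w * a * y ^ 2 = y := by rw [sq, ← mul_assoc, hc, hyby]
  have hy2b : y ^ 2 * (w * a) = y := by rw [sq, mul_assoc, ← hc, ← mul_assoc, hyby]
  have hL : a * w * (a * y ^ 2) = a * y := by rw [mul_assoc a w, ← mul_assoc w a, hby2]
  have hR : a * y ^ 2 * w * a = a * y := by rw [mul_assoc (a * y ^ 2) w a, mul_assoc a, hy2b]
  refine ⟨hL.trans hR.symm, ?_, ?_⟩
  · calc a * y ^ 2 * w * a * w * (a * y ^ 2) = a * (y * (w * a) * y) * y := by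
          rw [hR, sq]; noncomm_ring
      _ = a * y ^ 2 := by rw [hyby, mul_assoc, sq]
  · have hwc : w * (a - a * y * (w * a)) = w * a - (w * a) ^ 2 * y :=
      calc w * (a - a * y * (w * a)) = w * a - w * a * y * (w * a) := by noncomm_ring
        _ = w * a - (w * a) ^ 2 * y := by rw [mul_assoc (w * a) y, ← hc, ← mul_assoc, sq]
    have hpow : ∀ m, ((a - a * w * (a * y ^ 2) * w * a) * w) ^ (m + 1)
        = (a - a * y * (w * a)) * (w * a - (w * a) ^ 2 * y) ^ m * w := fun m => by
      rw [hL, mul_assoc (a * y) w a, mul_pow_succ_eq, hwc]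
    unfold IsWQuasinilpotent
    apply superexpDecay_iff_tendsto.1
    rw [← SuperexpDecay.comp_add_iff 1]
    simp only [hpow]
    exact ((isQuasinilpotent_iff.1 hq).const_mul _).mul_const w

end Weighted

variable {A : Type*} [NormedRing A] [NormedAlgebra ℂ A] [StarRing A] [StarModule ℂ A]
  [CompleteSpace A]

/-- Theorem 3.6. -/
theorem isWCoreEPInv_exists_iff_polar (w a : A) (n : ℕ) (hn : 0 < n) :
    (∃ x, IsWCoreEPInv w a x) ↔
      (∃ x, IsWGDrazinInv w a x) ∧
      ∃ p : A, p ^ 2 = p ∧ star p = p ∧ p * w * a = p * w * a * p ∧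
        IsQuasinilpotent (p * w * a) ∧ IsUnit ((w * a) ^ n + p) := by
  have hpolar : ∀ p : A, (p ^ 2 = p ∧ star p = p ∧ p * w * a = p * w * a * p ∧
      IsQuasinilpotent (p * w * a) ∧ IsUnit ((w * a) ^ n + p)) ↔
      IsStarProjection p ∧ p * (w * a) * (1 - p) = 0 ∧ IsQuasinilpotent (p * (w * a)) ∧
        IsUnit ((w * a) ^ n + p) := fun p => by
    simp only [isStarProjection_iff', ← sq, mul_one_sub, sub_eq_zero, mul_assoc, and_assoc]
  have hunit : ∀ {p : A}, IsStarProjection p → p * (w * a) * (1 - p) = 0 →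
      IsQuasinilpotent (p * (w * a)) →
      (IsUnit ((w * a) ^ n + p) ↔ ∃ z, IsCornerInv (1 - p) (w * a) z) := fun hp hpb ht =>
    isUnit_pow_add_iff hp.isIdempotentElem hpb hn.ne' (ht.isUnit_one_add_pow hn.ne')
  constructor
  · rintro ⟨x, hx⟩
    obtain ⟨p, hp, hpb, ht, hz⟩ := hx.isCoreEPInv_mul.exists_triangular
    obtain ⟨y, hy⟩ := exists_isGDrazinInv_of_isCornerInv hp.isIdempotentElem hpb hz ht
    exact ⟨⟨_, hy.isWGDrazinInv⟩, p,
      (hpolar p).2 ⟨hp, hpb, ht, (hunit hp hpb ht).2 ⟨_, hz⟩⟩⟩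
  · rintro ⟨-, p, hp⟩
    obtain ⟨hp, hpb, ht, hu⟩ := (hpolar p).1 hp
    obtain ⟨z, hz⟩ := (hunit hp hpb ht).1 hu
    exact ⟨_, (hz.isCoreEPInv hp.isSelfAdjoint hpb ht).isWCoreEPInv⟩
end

section
/- Let A, W be n×n complex matrices and let X be a W-weighted core-EP inverse of A, i.e. A(WX)² = X, (WAWX)* = WAWX (where * is conjugate transpose), and lim_{k→∞} ‖(AW)ᵏ − XW(AW)^{k+1}‖^{1/k} = 0 (in the operator norm on n×n complex matrices). Then for every positive integer m, the matrix (WA)ᵐ + Iₙ − WAWX is invertible. -/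
open Filter

variable {A : Type*} [NormedRing A] [NormedAlgebra ℂ A] [StarRing A] [StarModule ℂ A]
  [CompleteSpace A]

attribute [local instance] Matrix.linftyOpNormedAddCommGroup Matrix.linftyOpNormedRing

/-!
Put `b = W * M` and `y = W * X`. Then `b * y ^ 2 = y`, and `‖bᵏ - y * bᵏ⁺¹‖` decays faster than any
geometric sequence, since `bᵏ⁺¹ - y * bᵏ⁺² = W * ((M * W)ᵏ - X * W * (M * W)ᵏ⁺¹) * M`.
Writing `b * y - y * b² * y = (bᵏ - y * bᵏ⁺¹) * yᵏ` for every `k ≥ 1`, the decay forces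
`y * b² * y = b * y`, so `p = b * y` is an idempotent with `(1 - p) * b * p = 0`: `b` is upper
triangular for the Peirce decomposition of `p`. Hence
`bᵐ + 1 - p = (1 + (1 - p) * bᵐ) * (1 - p + p * bᵐ)`. The second factor has the explicit inverse
`1 + yᵐ - yᵐ * bᵐ`; the first is a unit because `((1 - p) * bᵐ)ᵏ⁺¹ = (1 - p) * bᵐ⁽ᵏ⁺¹⁾` and
`(1 - p) * bʲ⁺¹ = b * (bʲ - y * bʲ⁺¹)` tends to `0`.
-/

open Topology

section Peirce

variable {R : Type*} [Ring R] {p a u : R}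

theorem one_sub_mul_pow_mul_eq_zero (hp : IsIdempotentElem p) (ha : (1 - p) * a * p = 0)
    (j : ℕ) : (1 - p) * a ^ j * p = 0 := by
  induction j with
  | zero => simpa using hp.one_sub_mul_self
  | succ j ih =>
    have hae : a * p = p * a * p := by
      rwa [sub_mul, sub_mul, one_mul, sub_eq_zero] at ha
    calc (1 - p) * a ^ (j + 1) * p = (1 - p) * a ^ j * (a * p) := by
          rw [pow_succ]; simp only [mul_assoc]
      _ = (1 - p) * a ^ j * p * (a * p) := by nth_rw 1 [hae]; simp only [mul_assoc]
      _ = 0 := by rw [ih, zero_mul]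

theorem one_sub_mul_pow_succ (hp : IsIdempotentElem p) (ha : (1 - p) * a * p = 0) (k : ℕ) :
    ((1 - p) * a) ^ (k + 1) = (1 - p) * a ^ (k + 1) := by
  induction k with
  | zero => simp
  | succ k ih =>
    calc ((1 - p) * a) ^ (k + 2)
        = (1 - p) * a ^ (k + 1) * a - (1 - p) * a ^ (k + 1) * p * a := by
          rw [pow_succ, ih]; noncomm_ring
      _ = (1 - p) * a ^ (k + 2) := by
          rw [one_sub_mul_pow_mul_eq_zero hp ha, zero_mul, sub_zero, mul_assoc, ← pow_succ]

theorem add_one_sub_eq_mul (ha : (1 - p) * a * p = 0) :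
    a + 1 - p = (1 + (1 - p) * a) * (1 - p + p * a) :=
  calc a + 1 - p = 1 - p + p * a + (1 - p) * a - (1 - p) * a * p + (1 - p) * a * p * a := by
        rw [ha]; noncomm_ring
    _ = (1 + (1 - p) * a) * (1 - p + p * a) := by noncomm_ring

theorem isUnit_one_sub_add_mul (hp : IsIdempotentElem p) (hpu : p * u = u) (hup : u * p = u)
    (hau : a * u = p) (huap : u * a * p = p) : IsUnit (1 - p + p * a) := by
  have hSu : (1 - p + p * a) * u = p :=
    calc (1 - p + p * a) * u = u - p * u + p * (a * u) := by noncomm_ring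
      _ = p := by rw [hpu, hau, hp.eq, sub_self, zero_add]
  have huS : u * (1 - p + p * a) = u * a :=
    calc u * (1 - p + p * a) = u - u * p + u * p * a := by noncomm_ring
      _ = u * a := by rw [hup, sub_self, zero_add]
  have huaS : u * a * (1 - p + p * a) = u * a - p + p * a :=
    calc u * a * (1 - p + p * a) = u * a - u * a * p + u * a * p * a := by noncomm_ring
      _ = u * a - p + p * a := by rw [huap]
  refine ⟨⟨_, 1 + u - u * a, ?_, ?_⟩, rfl⟩
  · calc (1 - p + p * a) * (1 + u - u * a)
          = 1 - p + p * a + (1 - p + p * a) * u - (1 - p + p * a) * u * a := by noncomm_ring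
      _ = 1 := by rw [hSu]; noncomm_ring
  · calc (1 + u - u * a) * (1 - p + p * a)
          = 1 - p + p * a + u * (1 - p + p * a) - u * a * (1 - p + p * a) := by noncomm_ring
      _ = 1 := by rw [huS, huaS]; noncomm_ring

end Peirce

section Ring

variable {R : Type*} [Ring R] {b y : R}

theorem pow_mul_pow_succ_of_mul_sq_s14 (hy : b * y ^ 2 = y) (k : ℕ) : b ^ k * y ^ (k + 1) = y := by
  induction k with
  | zero => simp
  | succ k ih =>
    calc b ^ (k + 1) * y ^ (k + 1 + 1) = b ^ k * (b * y ^ 2) * y ^ k := by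
          rw [pow_succ b, add_assoc, add_comm k, pow_add]; simp only [mul_assoc]
      _ = y := by rw [hy, mul_assoc, ← pow_succ', ih]

theorem pow_succ_mul_pow_succ_of_mul_sq (hy : b * y ^ 2 = y) (k : ℕ) :
    b ^ (k + 1) * y ^ (k + 1) = b * y := by
  rw [pow_succ' b, mul_assoc, pow_mul_pow_succ_of_mul_sq_s14 hy]

theorem mul_mul_pow_succ_of_mul_sq (hy : b * y ^ 2 = y) (k : ℕ) :
    b * y * y ^ (k + 1) = y ^ (k + 1) := by
  calc b * y * y ^ (k + 1) = b * y ^ 2 * y ^ k := by rw [pow_succ' y k, sq]; simp only [mul_assoc]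
    _ = y ^ (k + 1) := by rw [hy, pow_succ']

theorem mul_mul_self_of_mul_sq (hy : b * y ^ 2 = y) (hyb : y * b ^ 2 * y = b * y) :
    y * b * y = y :=
  calc y * b * y = y * b * (b * y ^ 2) := by rw [hy]
    _ = y * b ^ 2 * y * y := by rw [sq, sq]; simp only [mul_assoc]
    _ = y := by rw [hyb, mul_assoc, ← sq, hy]

theorem isIdempotentElem_mul_of_mul_sq (hy : b * y ^ 2 = y) (hyb : y * b ^ 2 * y = b * y) :
    IsIdempotentElem (b * y) :=
  calc b * y * (b * y) = b * (y * b * y) := by simp only [mul_assoc]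
    _ = b * y := by rw [mul_mul_self_of_mul_sq hy hyb]

theorem pow_succ_mul_mul_of_mul_sq (hy : b * y ^ 2 = y) (hyb : y * b ^ 2 * y = b * y)
    (k : ℕ) : y ^ (k + 1) * (b * y) = y ^ (k + 1) := by
  rw [pow_succ, mul_assoc, ← mul_assoc y b y, mul_mul_self_of_mul_sq hy hyb]

theorem one_sub_mul_mul_mul_eq_zero (hyb : y * b ^ 2 * y = b * y) :
    (1 - b * y) * b * (b * y) = 0 :=
  calc (1 - b * y) * b * (b * y) = b * (b * y) - b * (y * b ^ 2 * y) := by noncomm_ring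
    _ = 0 := by rw [hyb, sub_self]

theorem pow_mul_pow_mul_mul_of_mul_sq (hy : b * y ^ 2 = y) (hyb : y * b ^ 2 * y = b * y)
    (j : ℕ) : y ^ j * b ^ j * (b * y) = b * y := by
  induction j with
  | zero => simp
  | succ j ih =>
    have hp := isIdempotentElem_mul_of_mul_sq hy hyb
    have hcorner : b ^ j * (b * y) = b * y * b ^ j * (b * y) := by
      have := one_sub_mul_pow_mul_eq_zero hp (one_sub_mul_mul_mul_eq_zero hyb) j
      rwa [sub_mul, sub_mul, one_mul, sub_eq_zero] at this
    have hstep : y * b ^ (j + 1) * (b * y) = b ^ j * (b * y) :=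
      calc y * b ^ (j + 1) * (b * y) = y * b * (b ^ j * (b * y)) := by
            rw [pow_succ']; simp only [mul_assoc]
        _ = y * b ^ 2 * y * b ^ j * (b * y) := by rw [hcorner, sq]; simp only [mul_assoc]
        _ = b ^ j * (b * y) := by rw [hyb, ← hcorner]
    calc y ^ (j + 1) * b ^ (j + 1) * (b * y) = y ^ j * (y * b ^ (j + 1) * (b * y)) := by
          rw [pow_succ]; simp only [mul_assoc]
      _ = b * y := by rw [hstep, ← mul_assoc, ih]

end Ring

theorem tendsto_mul_pow_of_tendsto_rpow_one_div {a : ℕ → ℝ} (ha : ∀ k, 0 ≤ a k)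
    (h : Tendsto (fun k : ℕ => a k ^ (1 / (k : ℝ))) atTop (𝓝 0)) (C : ℝ) :
    Tendsto (fun k => a k * C ^ k) atTop (𝓝 0) := by
  have hlim : Tendsto (fun k : ℕ => a k ^ (1 / (k : ℝ)) * |C|) atTop (𝓝 0) := by
    simpa using h.mul_const |C|
  have hsmall := hlim.eventually_lt_const (show (0 : ℝ) < 1 / 2 by norm_num)
  refine squeeze_zero_norm' ?_
    (tendsto_pow_atTop_nhds_zero_of_lt_one (by norm_num : (0 : ℝ) ≤ 1 / 2) (by norm_num))
  filter_upwards [hsmall, eventually_ne_atTop 0] with k hk hk0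
  calc ‖a k * C ^ k‖ = (a k ^ (1 / (k : ℝ)) * |C|) ^ k := by
        rw [mul_pow, one_div, Real.rpow_inv_natCast_pow (ha k) hk0, norm_mul,
          Real.norm_of_nonneg (ha k), norm_pow, Real.norm_eq_abs]
    _ ≤ (1 / 2) ^ k :=
        pow_le_pow_left₀ (mul_nonneg (Real.rpow_nonneg (ha k) _) (abs_nonneg C)) hk.le k

section NormedRing

variable {R : Type*} [NormedRing R]

theorem norm_neg_pow (x : R) (k : ℕ) : ‖(-x) ^ k‖ = ‖x ^ k‖ := by
  rcases neg_one_pow_eq_or R k with h | h <;> simp [neg_pow, h]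

theorem isUnit_one_add_of_norm_pow_lt_one [HasSummableGeomSeries R] {x : R} {k : ℕ}
    (hk : ‖x ^ (k + 1)‖ < 1) : IsUnit (1 + x) := by
  have hunit : IsUnit (1 - (-x) ^ (k + 1)) :=
    (Units.oneSub _ (by rwa [norm_neg_pow])).isUnit
  have hcomm : Commute (1 - -x) (∑ i ∈ Finset.range (k + 1), (-x) ^ i) :=
    Commute.sum_right _ _ _ fun i _ => ((Commute.one_left _).sub_left (Commute.self_pow _ i))
  rw [← mul_neg_geom_sum, hcomm.isUnit_mul_iff, sub_neg_eq_add] at hunit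
  exact hunit.1

theorem eq_zero_of_eventually_eq_mul_pow {d : ℕ → R}
    (hd : ∀ C : ℝ, Tendsto (fun k => ‖d k‖ * C ^ k) atTop (𝓝 0)) {x z : R}
    (hx : ∀ᶠ k in atTop, x = d k * z ^ k) : x = 0 := by
  refine norm_le_zero_iff.mp (ge_of_tendsto (hd ‖z‖) ?_)
  filter_upwards [hx, eventually_gt_atTop 0] with k hk hk0
  calc ‖x‖ = ‖d k * z ^ k‖ := by rw [hk]
    _ ≤ ‖d k‖ * ‖z‖ ^ k := (norm_mul_le _ _).trans (by gcongr; exact norm_pow_le' z hk0)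

theorem tendsto_norm_mul_pow_of_succ_eq_mul_mul {d d' : ℕ → R}
    (hd' : ∀ C : ℝ, Tendsto (fun k => ‖d' k‖ * C ^ k) atTop (𝓝 0)) {a c : R}
    (h : ∀ k, d (k + 1) = a * d' k * c) (C : ℝ) :
    Tendsto (fun k => ‖d k‖ * C ^ k) atTop (𝓝 0) := by
  rw [← tendsto_add_atTop_iff_nat 1]
  refine squeeze_zero_norm (fun k => ?_) (by simpa using (hd' |C|).const_mul (‖a‖ * ‖c‖ * |C|))
  calc ‖‖d (k + 1)‖ * C ^ (k + 1)‖ = ‖a * d' k * c‖ * |C| ^ (k + 1) := by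
        rw [h, norm_mul, norm_norm, norm_pow, Real.norm_eq_abs]
    _ ≤ ‖a‖ * ‖d' k‖ * ‖c‖ * |C| ^ (k + 1) := by gcongr; exact norm_mul₃_le
    _ = ‖a‖ * ‖c‖ * |C| * (‖d' k‖ * |C| ^ k) := by ring

end NormedRing

section CoreEP

variable {R : Type*} [NormedRing R] {b y : R}

theorem mul_pow_two_mul_of_tendsto (hy : b * y ^ 2 = y)
    (hd : ∀ C : ℝ, Tendsto (fun k => ‖b ^ k - y * b ^ (k + 1)‖ * C ^ k) atTop (𝓝 0)) :
    y * b ^ 2 * y = b * y := by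
  rw [← sub_eq_zero, ← neg_sub, neg_eq_zero]
  refine eq_zero_of_eventually_eq_mul_pow hd (z := y) ?_
  filter_upwards [eventually_gt_atTop 0] with k hk
  obtain ⟨j, rfl⟩ : ∃ j, k = j + 1 := ⟨k - 1, by omega⟩
  calc b * y - y * b ^ 2 * y = b ^ (j + 1) * y ^ (j + 1) - y * b * (b ^ (j + 1) * y ^ (j + 1)) := by
        rw [pow_succ_mul_pow_succ_of_mul_sq hy]; noncomm_ring
    _ = (b ^ (j + 1) - y * b ^ (j + 1 + 1)) * y ^ (j + 1) := by
        rw [pow_succ' b (j + 1)]; noncomm_ring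

theorem tendsto_norm_one_sub_mul_mul_pow
    (hd : Tendsto (fun k => ‖b ^ k - y * b ^ (k + 1)‖) atTop (𝓝 0)) :
    Tendsto (fun k => ‖(1 - b * y) * b ^ k‖) atTop (𝓝 0) := by
  rw [← tendsto_add_atTop_iff_nat 1]
  refine squeeze_zero (fun _ => norm_nonneg _) (fun k => ?_) (by simpa using hd.const_mul ‖b‖)
  calc ‖(1 - b * y) * b ^ (k + 1)‖ = ‖b * (b ^ k - y * b ^ (k + 1))‖ := by
        rw [pow_succ' b k]; congr 1; noncomm_ring
    _ ≤ ‖b‖ * ‖b ^ k - y * b ^ (k + 1)‖ := norm_mul_le _ _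

theorem isUnit_pow_add_one_sub_mul [HasSummableGeomSeries R] (hy : b * y ^ 2 = y)
    (hd : ∀ C : ℝ, Tendsto (fun k => ‖b ^ k - y * b ^ (k + 1)‖ * C ^ k) atTop (𝓝 0))
    {m : ℕ} (hm : 0 < m) : IsUnit (b ^ m + 1 - b * y) := by
  have hyb := mul_pow_two_mul_of_tendsto hy hd
  have hp := isIdempotentElem_mul_of_mul_sq hy hyb
  have hcorner : (1 - b * y) * b ^ m * (b * y) = 0 :=
    one_sub_mul_pow_mul_eq_zero hp (one_sub_mul_mul_mul_eq_zero hyb) m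
  obtain ⟨k, hk⟩ : ∃ k, ‖((1 - b * y) * b ^ m) ^ (k + 1)‖ < 1 := by
    have hlim := (tendsto_norm_one_sub_mul_mul_pow (by simpa using hd 1)).comp
      (tendsto_atTop_mono (fun k => Nat.le_mul_of_pos_left _ hm |>.trans' k.le_succ) tendsto_id)
    obtain ⟨k, hk⟩ := (hlim.eventually_lt_const one_pos).exists
    exact ⟨k, by rwa [one_sub_mul_pow_succ hp hcorner, ← pow_mul]⟩
  obtain ⟨l, rfl⟩ : ∃ l, m = l + 1 := ⟨m - 1, by omega⟩
  rw [add_one_sub_eq_mul hcorner]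
  exact (isUnit_one_add_of_norm_pow_lt_one hk).mul (isUnit_one_sub_add_mul hp
    (mul_mul_pow_succ_of_mul_sq hy l) (pow_succ_mul_mul_of_mul_sq hy hyb l)
    (pow_succ_mul_pow_succ_of_mul_sq hy l) (pow_mul_pow_mul_mul_of_mul_sq hy hyb _))

end CoreEP

theorem pow_succ_sub_mul_pow_succ_succ {R : Type*} [Ring R] (W M X : R) (k : ℕ) :
    (W * M) ^ (k + 1) - W * X * (W * M) ^ (k + 1 + 1) =
      W * ((M * W) ^ k - X * W * (M * W) ^ (k + 1)) * M := by
  rw [mul_sub, sub_mul]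
  congr 1
  · rw [← mul_pow_mul, mul_assoc, ← pow_succ]
  · rw [show W * (X * W * (M * W) ^ (k + 1)) * M = W * X * (W * (M * W) ^ (k + 1) * M) by
      simp only [mul_assoc], ← mul_pow_mul, mul_assoc _ W M, ← pow_succ]

theorem matrix_pow_add_one_sub_isUnit_general (n : ℕ) (M W X : Matrix (Fin n) (Fin n) ℂ)
    (h1 : M * (W * X) ^ 2 = X)
    (h3 : Filter.Tendsto
      (fun k : ℕ => ‖(M * W) ^ k - X * W * (M * W) ^ (k + 1)‖ ^ (1 / (k : ℝ)))
      Filter.atTop (nhds 0))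
    (m : ℕ) (hm : 0 < m) :
    IsUnit ((W * M) ^ m + 1 - W * M * W * X) := by
  have : HasSummableGeomSeries (Matrix (Fin n) (Fin n) ℂ) := by
    let := Matrix.linftyOpNormedSpace (R := ℂ) (m := Fin n) (n := Fin n) (α := ℂ)
    have := FiniteDimensional.complete ℂ (Matrix (Fin n) (Fin n) ℂ)
    infer_instance
  have hy : W * M * (W * X) ^ 2 = W * X := by rw [mul_assoc, h1]
  have hd := tendsto_norm_mul_pow_of_succ_eq_mul_mul
    (tendsto_mul_pow_of_tendsto_rpow_one_div (fun _ => norm_nonneg _) h3)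
    (d := fun k => (W * M) ^ k - W * X * (W * M) ^ (k + 1)) (pow_succ_sub_mul_pow_succ_succ W M X)
  rw [show W * M * W * X = W * M * (W * X) by simp only [mul_assoc]]
  exact isUnit_pow_add_one_sub_mul hy hd hm

/-- Corollary 3.8. -/
theorem matrix_pow_add_one_sub_isUnit (n : ℕ) (M W X : Matrix (Fin n) (Fin n) ℂ)
    (h1 : M * (W * X) ^ 2 = X) (h2 : star (W * M * W * X) = W * M * W * X)
    (h3 : Filter.Tendsto
      (fun k : ℕ => ‖(M * W) ^ k - X * W * (M * W) ^ (k + 1)‖ ^ (1 / (k : ℝ)))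
      Filter.atTop (nhds 0))
    (m : ℕ) (hm : 0 < m) :
    IsUnit ((W * M) ^ m + 1 - W * M * W * X) :=
  matrix_pow_add_one_sub_isUnit_general n M W X h1 h3 m hm
end
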